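/- arXiv:1401.1940 — 10 statements merged into one kernel-verified Lean document; each statement's English description precedes it below -/
import Mathlib

section
/- If A is a real symmetric matrix whose underlying graph is a tree (i.e., the off-diagonal nonzero pattern of A forms a tree), then the largest eigenvalue of A has multiplicity 1; consequently the characteristic polynomial of A is not a square of a real polynomial. -/
/-!
Along the unique paths of a tree from a fixed root one can choose signs `d i = ±1` so that
`d i * A i j * d j > 0` on every edge; the signature similarity `B = D A D`, `D = diagonal d`,
has the same characteristic polynomial as `A`, is symmetric, and has nonnegative off-diagonal
entries that are positive exactly along the (connected) tree. For such a matrix the top eigenvalue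
`μ` is simple, by the Perron–Frobenius argument: if `x` is a top eigenvector then so is `|x|`,
since `|x|ᵀ B |x| ≥ xᵀ B x = μ ‖x‖²` and `μ` maximises the Rayleigh quotient; and a nonnegative
top eigenvector vanishing at one vertex vanishes everywhere. Given two orthonormal top
eigenvectors, a combination of them vanishing at a vertex would be a nonzero top eigenvector.
A root of multiplicity one rules out `charpoly = g ^ 2`.
-/

open Matrix Polynomial
open scoped Finset

namespace SimpleGraph
variable {V : Type*} {G : SimpleGraph V}

namespace Walk
variable {M : Type*} [CommMonoid M] (s : V → V → M)

def dartProd {u v : V} (p : G.Walk u v) : M := (p.darts.map fun e => s e.fst e.snd).prod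

@[simp] lemma dartProd_nil {u : V} : (nil : G.Walk u u).dartProd s = 1 := rfl

@[simp] lemma dartProd_cons {u v w : V} (h : G.Adj u v) (p : G.Walk v w) :
    (cons h p).dartProd s = s u v * p.dartProd s := by
  simp [dartProd]

@[simp] lemma dartProd_concat {u v w : V} (p : G.Walk u v) (h : G.Adj v w) :
    (p.concat h).dartProd s = p.dartProd s * s v w := by
  simp [dartProd, darts_concat, mul_comm]

lemma dartProd_mul_self {s : V → V → M} (hs : ∀ i j, G.Adj i j → s i j * s i j = 1)
    {u v : V} (p : G.Walk u v) : p.dartProd s * p.dartProd s = 1 := by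
  induction p with
  | nil => simp
  | cons h p ih => rw [dartProd_cons, mul_mul_mul_comm, hs _ _ h, ih, one_mul]

end Walk

lemma IsAcyclic.eq_concat_or_eq_concat (hG : G.IsAcyclic) {r i j : V} {p : G.Walk r i}
    {q : G.Walk r j} (hp : p.IsPath) (hq : q.IsPath) (h : G.Adj i j) :
    q = p.concat h ∨ p = q.concat h.symm := by
  classical
  by_cases hj : j ∈ p.support
  · right
    have hdrop : p.dropUntil j hj = Walk.cons h.symm Walk.nil :=
      congrArg Subtype.val ((hG.subsingleton_path j i).elim ⟨_, hp.dropUntil hj⟩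
        (Path.singleton h.symm))
    have htake : p.takeUntil j hj = q :=
      congrArg Subtype.val ((hG.subsingleton_path r j).elim ⟨_, hp.takeUntil hj⟩ ⟨q, hq⟩)
    rw [Walk.concat_eq_append, ← htake, ← hdrop, Walk.take_spec]
  · left
    exact congrArg Subtype.val ((hG.subsingleton_path r j).elim ⟨q, hq⟩ ⟨_, hp.concat hj h⟩)

lemma IsTree.exists_mul_eq_of_mul_self_eq_one {M : Type*} [CommMonoid M] (hG : G.IsTree)
    {s : V → V → M} (hsymm : ∀ i j, G.Adj i j → s j i = s i j)
    (hs : ∀ i j, G.Adj i j → s i j * s i j = 1) :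
    ∃ d : V → M, (∀ i, d i * d i = 1) ∧ ∀ i j, G.Adj i j → d i * d j = s i j := by
  obtain ⟨r⟩ := hG.connected.nonempty
  choose path hpath using fun v => (hG.connected.preconnected r v).exists_isPath
  refine ⟨fun v => (path v).dartProd s, fun v => Walk.dartProd_mul_self hs _, fun i j h => ?_⟩
  rcases hG.isAcyclic.eq_concat_or_eq_concat (hpath i) (hpath j) h with hj | hi
  · simp only [hj, Walk.dartProd_concat, ← mul_assoc, Walk.dartProd_mul_self hs, one_mul]
  · simp only [hi, Walk.dartProd_concat, hsymm i j h, mul_right_comm _ (s i j),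
      Walk.dartProd_mul_self hs, one_mul]

lemma IsTree.exists_signs_mul_mul_pos (hG : G.IsTree) {A : Matrix V V ℝ} (hA : A.IsSymm)
    (hpat : ∀ i j, G.Adj i j → A i j ≠ 0) :
    ∃ d : V → ℝ, (∀ i, d i * d i = 1) ∧ ∀ i j, G.Adj i j → 0 < d i * A i j * d j := by
  obtain ⟨d, hd, hdA⟩ := hG.exists_mul_eq_of_mul_self_eq_one (s := fun i j => Real.sign (A i j))
    (fun i j _ => by rw [hA.apply]) fun i j h =>
      mul_self_eq_one_iff.mpr (Real.sign_apply_eq_of_ne_zero _ (hpat i j h)).symm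
  refine ⟨d, hd, fun i j h => ?_⟩
  rw [mul_right_comm, hdA i j h]
  exact Real.sign_mul_pos_of_ne_zero _ (hpat i j h)

end SimpleGraph

lemma Matrix.charpoly_diagonal_mul_mul_diagonal {R n : Type*} [CommRing R] [Fintype n]
    [DecidableEq n] {d : n → R} (hd : ∀ i, d i * d i = 1) (A : Matrix n n R) :
    (diagonal d * A * diagonal d).charpoly = A.charpoly := by
  have hD : diagonal d * diagonal d = 1 := by
    rw [diagonal_mul_diagonal, funext hd, diagonal_one]
  rw [mul_assoc, charpoly_mul_comm, mul_assoc, hD, mul_one]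

namespace Matrix.IsHermitian
variable {ι : Type*} [Fintype ι] [DecidableEq ι] {B : Matrix ι ι ℝ}

lemma posSemidef_algebraMap_sub (hB : B.IsHermitian) {μ : ℝ} (hμ : ∀ i, hB.eigenvalues i ≤ μ) :
    (algebraMap ℝ (Matrix ι ι ℝ) μ - B).PosSemidef := by
  rw [posSemidef_iff_isHermitian_and_spectrum_nonneg, ← spectrum.singleton_sub_eq,
    hB.spectrum_real_eq_range_eigenvalues]
  refine ⟨(isHermitian_diagonal _).sub hB, ?_⟩
  rintro _ ⟨_, rfl, _, ⟨i, rfl⟩, rfl⟩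
  exact sub_nonneg.mpr (hμ i)

lemma dotProduct_mulVec_le (hB : B.IsHermitian) {μ : ℝ} (hμ : ∀ i, hB.eigenvalues i ≤ μ)
    (x : ι → ℝ) : x ⬝ᵥ B *ᵥ x ≤ μ * (x ⬝ᵥ x) := by
  have := (hB.posSemidef_algebraMap_sub hμ).dotProduct_mulVec_nonneg x
  simpa [sub_mulVec, dotProduct_sub, Algebra.algebraMap_eq_smul_one, smul_mulVec] using this

lemma mulVec_eq_of_dotProduct_mulVec_eq (hB : B.IsHermitian) {μ : ℝ}
    (hμ : ∀ i, hB.eigenvalues i ≤ μ) {x : ι → ℝ} (hx : x ⬝ᵥ B *ᵥ x = μ * (x ⬝ᵥ x)) :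
    B *ᵥ x = μ • x := by
  have := ((hB.posSemidef_algebraMap_sub hμ).dotProduct_mulVec_zero_iff x).mp
    (by simp [sub_mulVec, dotProduct_sub, Algebra.algebraMap_eq_smul_one, smul_mulVec, hx])
  simpa [sub_mulVec, Algebra.algebraMap_eq_smul_one, smul_mulVec, sub_eq_zero, eq_comm] using this

lemma mulVec_abs_eq_of_mulVec_eq (hB : B.IsHermitian) (hoff : ∀ i j, i ≠ j → 0 ≤ B i j)
    {μ : ℝ} (hμ : ∀ i, hB.eigenvalues i ≤ μ) {x : ι → ℝ} (hx : B *ᵥ x = μ • x) :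
    B *ᵥ |x| = μ • |x| := by
  have habs : x ⬝ᵥ B *ᵥ x ≤ |x| ⬝ᵥ B *ᵥ |x| := by
    simp only [dotProduct, mulVec, Finset.mul_sum, Pi.abs_apply]
    refine Finset.sum_le_sum fun i _ => Finset.sum_le_sum fun j _ => ?_
    rcases eq_or_ne i j with rfl | hij
    · exact le_of_eq (by linear_combination -B i i * abs_mul_abs_self (x i))
    · calc x i * (B i j * x j) ≤ |x i * (B i j * x j)| := le_abs_self _
        _ = |x i| * (B i j * |x j|) := by rw [abs_mul, abs_mul, abs_of_nonneg (hoff i j hij)]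
  have hnorm : |x| ⬝ᵥ |x| = x ⬝ᵥ x :=
    Finset.sum_congr rfl fun i _ => abs_mul_abs_self (x i)
  refine hB.mulVec_eq_of_dotProduct_mulVec_eq hμ (le_antisymm (hB.dotProduct_mulVec_le hμ _) ?_)
  calc μ * (|x| ⬝ᵥ |x|) = x ⬝ᵥ B *ᵥ x := by rw [hnorm, hx, dotProduct_smul, smul_eq_mul]
    _ ≤ |x| ⬝ᵥ B *ᵥ |x| := habs

end Matrix.IsHermitian

namespace Matrix
variable {ι : Type*} [Fintype ι] {B : Matrix ι ι ℝ} {G : SimpleGraph ι}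

lemma eq_zero_of_nonneg_of_mulVec_eq (hG : G.Preconnected) (hadj : ∀ i j, G.Adj i j → 0 < B i j)
    (hoff : ∀ i j, i ≠ j → 0 ≤ B i j) {μ : ℝ} {w : ι → ℝ} (hw0 : 0 ≤ w) (hw : B *ᵥ w = μ • w)
    {k : ι} (hk : w k = 0) : w = 0 := by
  have hstep : ∀ a b, G.Adj a b → w a = 0 → w b = 0 := by
    intro a b hab ha
    have hsum : ∑ s, B a s * w s = 0 := by simpa [mulVec, dotProduct, ha] using congrFun hw a
    have hterm : ∀ s ∈ Finset.univ, 0 ≤ B a s * w s := fun s _ => by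
      rcases eq_or_ne a s with rfl | has
      · simp [ha]
      · exact mul_nonneg (hoff a s has) (hw0 s)
    have := (Finset.sum_eq_zero_iff_of_nonneg hterm).mp hsum b (Finset.mem_univ b)
    exact (mul_eq_zero.mp this).resolve_left (hadj a b hab).ne'
  have hwalk : ∀ {a b} (p : G.Walk a b), w a = 0 → w b = 0 := by
    intro a b p
    induction p with
    | nil => exact id
    | cons h _ ih => exact fun ha => ih (hstep _ _ h ha)
  funext v
  obtain ⟨p⟩ := hG k v
  exact hwalk p hk

namespace IsHermitian
variable [DecidableEq ι]

lemma eq_zero_of_mulVec_eq_of_apply_eq_zero (hB : B.IsHermitian) (hG : G.Preconnected)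
    (hadj : ∀ i j, G.Adj i j → 0 < B i j) (hoff : ∀ i j, i ≠ j → 0 ≤ B i j) {μ : ℝ}
    (hμ : ∀ i, hB.eigenvalues i ≤ μ) {x : ι → ℝ} (hx : B *ᵥ x = μ • x) {k : ι} (hk : x k = 0) :
    x = 0 :=
  Pi.abs_eq_zero x |>.mp <| eq_zero_of_nonneg_of_mulVec_eq hG hadj hoff (abs_nonneg x)
    (hB.mulVec_abs_eq_of_mulVec_eq hoff hμ hx) (k := k) (by simp [hk])

lemma subsingleton_eigenvalues_eq (hB : B.IsHermitian) (hG : G.Preconnected)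
    (hadj : ∀ i j, G.Adj i j → 0 < B i j) (hoff : ∀ i j, i ≠ j → 0 ≤ B i j) {μ : ℝ}
    (hμ : ∀ i, hB.eigenvalues i ≤ μ) : {i | hB.eigenvalues i = μ}.Subsingleton := by
  intro i hi j hj
  by_contra hij
  set e := hB.eigenvectorBasis
  obtain ⟨k, hk⟩ : ∃ k, e i k ≠ 0 := by
    by_contra! h
    exact e.orthonormal.ne_zero i (by ext k; simp [h k])
  have he : ∀ l, B *ᵥ ⇑(e l) = hB.eigenvalues l • ⇑(e l) := hB.mulVec_eigenvectorBasis
  set u := e j k • e i - e i k • e j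
  have hu : B *ᵥ ⇑u = μ • ⇑u := by
    simp only [u, WithLp.ofLp_sub, WithLp.ofLp_smul, mulVec_sub, mulVec_smul, he,
      show hB.eigenvalues i = μ from hi, show hB.eigenvalues j = μ from hj, smul_sub,
      smul_comm μ]
  have hu0 : u = 0 := by
    have := hB.eq_zero_of_mulVec_eq_of_apply_eq_zero hG hadj hoff hμ hu (k := k)
      (by simp [u, mul_comm])
    exact WithLp.ofLp_injective 2 (by simpa using this)
  have := (LinearIndepOn.pair_iff e hij).mp (e.orthonormal.linearIndependent.linearIndepOn _)
    (e j k) (-e i k) (by rw [neg_smul, ← sub_eq_add_neg]; exact hu0)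
  exact hk (neg_eq_zero.mp this.2)

lemma roots_charpoly_eq_map_eigenvalues (hB : B.IsHermitian) :
    B.charpoly.roots = Finset.univ.val.map hB.eigenvalues := by
  simp [hB.roots_charpoly_eq_eigenvalues]

lemma isRoot_charpoly_iff (hB : B.IsHermitian) {x : ℝ} :
    B.charpoly.IsRoot x ↔ ∃ i, hB.eigenvalues i = x := by
  rw [← mem_roots B.charpoly_monic.ne_zero, hB.roots_charpoly_eq_map_eigenvalues]
  simp

lemma rootMultiplicity_charpoly (hB : B.IsHermitian) (x : ℝ) :
    B.charpoly.rootMultiplicity x = #{i | hB.eigenvalues i = x} := by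
  rw [← count_roots, hB.roots_charpoly_eq_map_eigenvalues, Multiset.count_map]
  simp [Finset.card, Finset.filter_val, eq_comm]

theorem exists_max_root_charpoly_rootMultiplicity_eq_one (hB : B.IsHermitian)
    (hG : G.Connected) (hadj : ∀ i j, G.Adj i j → 0 < B i j) (hoff : ∀ i j, i ≠ j → 0 ≤ B i j) :
    ∃ μ : ℝ, B.charpoly.IsRoot μ ∧ (∀ x : ℝ, B.charpoly.IsRoot x → x ≤ μ) ∧
      B.charpoly.rootMultiplicity μ = 1 := by
  obtain ⟨i₀, -, hi₀⟩ := Finset.univ.exists_max_image hB.eigenvalues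
    (Finset.univ_nonempty_iff.mpr hG.nonempty)
  have hμ : ∀ i, hB.eigenvalues i ≤ hB.eigenvalues i₀ := fun i => hi₀ i (Finset.mem_univ i)
  refine ⟨hB.eigenvalues i₀, hB.isRoot_charpoly_iff.mpr ⟨i₀, rfl⟩, ?_, ?_⟩
  · intro x hx
    obtain ⟨i, rfl⟩ := hB.isRoot_charpoly_iff.mp hx
    exact hμ i
  · rw [hB.rootMultiplicity_charpoly, Finset.card_eq_one]
    refine ⟨i₀, Finset.eq_singleton_iff_unique_mem.mpr ⟨by simp, fun i hi => ?_⟩⟩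
    exact hB.subsingleton_eigenvalues_eq hG.preconnected hadj hoff hμ
      (Finset.mem_filter.mp hi).2 rfl

end IsHermitian
end Matrix

lemma Polynomial.not_exists_eq_sq_of_rootMultiplicity_eq_one {R : Type*} [CommRing R] [IsDomain R]
    {p : R[X]} {a : R} (h : p.rootMultiplicity a = 1) : ¬ ∃ g : R[X], p = g ^ 2 := by
  rintro ⟨g, rfl⟩
  have hg : g ≠ 0 := by rintro rfl; simp at h
  rw [sq, rootMultiplicity_mul (mul_ne_zero hg hg)] at h
  omega

theorem stmt_3_general (n : ℕ) (A : Matrix (Fin n) (Fin n) ℝ) (hA : A.IsSymm)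
    (G : SimpleGraph (Fin n)) (hG : G.IsTree)
    (hpat : ∀ i j : Fin n, i ≠ j → (A i j ≠ 0 ↔ G.Adj i j)) :
    (∃ μ : ℝ, A.charpoly.IsRoot μ ∧ (∀ x : ℝ, A.charpoly.IsRoot x → x ≤ μ) ∧
      A.charpoly.rootMultiplicity μ = 1) ∧
    ¬ ∃ g : Polynomial ℝ, A.charpoly = g ^ 2 := by
  obtain ⟨d, hd, hdA⟩ :=
    hG.exists_signs_mul_mul_pos hA fun i j h => (hpat i j h.ne).mpr h
  set B := diagonal d * A * diagonal d
  have hB_apply : ∀ i j, B i j = d i * A i j * d j := by simp [B, mul_comm]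
  have hB : B.IsHermitian := by
    ext i j
    simp only [conjTranspose_apply, star_trivial, hB_apply, hA.apply i j]
    ring
  have hoff : ∀ i j, i ≠ j → 0 ≤ B i j := by
    intro i j hij
    by_cases h : G.Adj i j
    · exact hB_apply i j ▸ (hdA i j h).le
    · simp [hB_apply, not_not.mp (mt (hpat i j hij).mp h)]
  obtain ⟨μ, hroot, hmax, hmult⟩ :=
    hB.exists_max_root_charpoly_rootMultiplicity_eq_one hG.connected
      (fun i j h => hB_apply i j ▸ hdA i j h) hoff
  rw [← charpoly_diagonal_mul_mul_diagonal hd A]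
  exact ⟨⟨μ, hroot, hmax, hmult⟩, not_exists_eq_sq_of_rootMultiplicity_eq_one hmult⟩

theorem stmt_3 (n : ℕ) (hn : 2 ≤ n) (A : Matrix (Fin n) (Fin n) ℝ) (hA : A.IsSymm)
    (G : SimpleGraph (Fin n)) (hG : G.IsTree)
    (hpat : ∀ i j : Fin n, i ≠ j → (A i j ≠ 0 ↔ G.Adj i j)) :
    (∃ μ : ℝ, A.charpoly.IsRoot μ ∧ (∀ x : ℝ, A.charpoly.IsRoot x → x ≤ μ) ∧
      A.charpoly.rootMultiplicity μ = 1) ∧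
    ¬ ∃ g : Polynomial ℝ, A.charpoly = g ^ 2 :=
  stmt_3_general n A hA G hG hpat
end

section
/- For every n ≥ 2, the cycle graph C_{2n} on 2n vertices allows the characteristic polynomial a square: there exists a real symmetric 2n×2n matrix M whose off-diagonal nonzero pattern is exactly the edge set of the cycle C_{2n} and whose characteristic polynomial is the square of a real polynomial. -/
/-!
The witness is `M = [[A, S], [-S, A]]`, with `A` the adjacency matrix of the path on `n` vertices
and `S = E_{n,1} - E_{1,n}`: the two diagonal blocks give two paths, and `S`, `-S` add the edges
`{n, n+1}` and `{1, 2n}` closing them into one cycle.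

Over `ℂ`, conjugating `M` by `[[1, 0], [i, 1]]` makes it block upper triangular, so
`χ_M = χ_{A - iS} · χ_{A + iS}`. As `A` is symmetric and `S` antisymmetric, `N = A + iS` is
Hermitian and `A - iS = Nᵀ`, whence `χ_M = χ_N²`; finally `χ_N = ∏ (X - λ_k)` has real
coefficients because the eigenvalues of a Hermitian matrix are real.
-/

open Polynomial Matrix SimpleGraph

namespace Matrix

variable {m : Type*} [Fintype m] [DecidableEq m]

theorem charpoly_fromBlocks_neg_eq_mul {R : Type*} [CommRing R] {e : R} (he : e * e = -1)
    (P Q : Matrix m m R) :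
    (fromBlocks P Q (-Q) P).charpoly = (P - e • Q).charpoly * (P + e • Q).charpoly := by
  set T : Matrix (m ⊕ m) (m ⊕ m) R := fromBlocks 1 0 (e • 1) 1
  set U : Matrix (m ⊕ m) (m ⊕ m) R := fromBlocks 1 0 (-e • 1) 1
  have hUT : U * T = 1 := by simp [T, U, fromBlocks_multiply, ← fromBlocks_one]
  have hconj : T * fromBlocks P Q (-Q) P * U = fromBlocks (P - e • Q) Q 0 (P + e • Q) := by
    simp only [T, U, fromBlocks_multiply, Matrix.smul_mul, Matrix.mul_smul, Matrix.one_mul,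
      Matrix.mul_one, Matrix.zero_mul, Matrix.mul_zero, zero_add, add_zero, smul_add, smul_smul]
    congr 1 <;> match_scalars <;> grind
  rw [← charpoly_fromBlocks_zero₂₁, ← hconj, charpoly_mul_comm, ← mul_assoc, hUT, one_mul]

theorem IsHermitian.charpoly_mem_lifts {𝕜 : Type*} [RCLike 𝕜] {A : Matrix m m 𝕜}
    (hA : A.IsHermitian) : A.charpoly ∈ lifts (algebraMap ℝ 𝕜) :=
  ⟨∏ i, (X - C (hA.eigenvalues i)), by simp [hA.charpoly_eq, RCLike.algebraMap_eq_ofReal]⟩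

theorem exists_charpoly_fromBlocks_eq_sq {A S : Matrix m m ℝ} (hA : Aᵀ = A) (hS : Sᵀ = -S) :
    ∃ g : ℝ[X], (fromBlocks A S (-S) A).charpoly = g ^ 2 := by
  set A' := A.map (algebraMap ℝ ℂ)
  set S' := S.map (algebraMap ℝ ℂ)
  set N := A' + Complex.I • S'
  have hN : N.IsHermitian := by
    ext i j
    have hAij := congrFun₂ hA i j
    have hSij := congrFun₂ hS i j
    simp only [transpose_apply, neg_apply] at hAij hSij
    simp [N, A', S', hAij, hSij]
  have hNt : Nᵀ = A' - Complex.I • S' := by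
    rw [transpose_add, transpose_smul, ← transpose_map, ← transpose_map, hA, hS,
      Matrix.map_neg _ (map_neg _), smul_neg, ← sub_eq_add_neg]
  obtain ⟨g, hg⟩ := (mem_lifts _).1 hN.charpoly_mem_lifts
  refine ⟨g, Polynomial.map_injective _ (algebraMap ℝ ℂ).injective ?_⟩
  rw [← charpoly_map, fromBlocks_map, Matrix.map_neg _ (map_neg _), Polynomial.map_pow, hg,
    charpoly_fromBlocks_neg_eq_mul Complex.I_mul_I, ← hNt, charpoly_transpose, sq]

end Matrix

theorem SimpleGraph.cycleGraph_adj_iff_val {N : ℕ} (hN : 2 ≤ N) {u v : Fin N} :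
    (cycleGraph N).Adj u v ↔ u.val + 1 = v.val ∨ v.val + 1 = u.val ∨
      (u.val = 0 ∧ v.val + 1 = N) ∨ (v.val = 0 ∧ u.val + 1 = N) := by
  obtain ⟨k, rfl⟩ : ∃ k, N = k + 2 := ⟨N - 2, by omega⟩
  rw [cycleGraph_adj, sub_eq_iff_eq_add', sub_eq_iff_eq_add', Fin.ext_iff, Fin.ext_iff,
    Fin.val_add_one, Fin.val_add_one]
  split_ifs <;> simp only [Fin.ext_iff, Fin.val_last] at * <;> omega

instance (n : ℕ) : DecidableRel (pathGraph n).Adj :=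
  fun _ _ => decidable_of_iff' _ pathGraph_adj

def cornerSkew (k : ℕ) : Matrix (Fin (k + 1)) (Fin (k + 1)) ℝ :=
  single (Fin.last k) 0 1 - single 0 (Fin.last k) 1

theorem cornerSkew_transpose (k : ℕ) : (cornerSkew k)ᵀ = -cornerSkew k := by
  rw [cornerSkew, transpose_sub, transpose_single, transpose_single, neg_sub]

def pathCycleBlocks (k : ℕ) :
    Matrix (Fin (k + 1) ⊕ Fin (k + 1)) (Fin (k + 1) ⊕ Fin (k + 1)) ℝ :=
  fromBlocks ((pathGraph (k + 1)).adjMatrix ℝ) (cornerSkew k) (-cornerSkew k)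
    ((pathGraph (k + 1)).adjMatrix ℝ)

def finSumFinEquivTwoMul (n : ℕ) : Fin n ⊕ Fin n ≃ Fin (2 * n) :=
  finSumFinEquiv.trans (finCongr (two_mul n).symm)

def cycleWitness (k : ℕ) : Matrix (Fin (2 * (k + 1))) (Fin (2 * (k + 1))) ℝ :=
  reindex (finSumFinEquivTwoMul (k + 1)) (finSumFinEquivTwoMul (k + 1)) (pathCycleBlocks k)

theorem cycleWitness_isSymm (k : ℕ) : (cycleWitness k).IsSymm := by
  rw [IsSymm, cycleWitness, transpose_reindex, pathCycleBlocks, fromBlocks_transpose,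
    transpose_adjMatrix, transpose_neg, cornerSkew_transpose, neg_neg]

theorem cycleWitness_ne_zero_iff {k : ℕ} (hk : 1 ≤ k) (i j : Fin (2 * (k + 1))) :
    cycleWitness k i j ≠ 0 ↔ (cycleGraph (2 * (k + 1))).Adj i j := by
  obtain ⟨x, rfl⟩ := (finSumFinEquivTwoMul (k + 1)).surjective i
  obtain ⟨y, rfl⟩ := (finSumFinEquivTwoMul (k + 1)).surjective j
  rw [cycleWitness, reindex_apply, submatrix_apply, Equiv.symm_apply_apply,
    Equiv.symm_apply_apply, cycleGraph_adj_iff_val (by omega)]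
  rcases x with a | a <;> rcases y with b | b <;>
    simp only [pathCycleBlocks, fromBlocks_apply₁₁, fromBlocks_apply₁₂, fromBlocks_apply₂₁,
      fromBlocks_apply₂₂, adjMatrix_apply, pathGraph_adj, cornerSkew, Matrix.sub_apply,
      Matrix.neg_apply, single_apply, Fin.ext_iff, finSumFinEquivTwoMul, Equiv.trans_apply,
      finSumFinEquiv_apply_left, finSumFinEquiv_apply_right, finCongr_apply, Fin.val_cast,
      Fin.val_castAdd, Fin.val_natAdd, Fin.val_last, Fin.val_zero]
  all_goals split_ifs <;> norm_num [-Fin.val_eq_zero_iff] <;> omega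

theorem stmt_8 (n : ℕ) (hn : 2 ≤ n) :
    ∃ M : Matrix (Fin (2 * n)) (Fin (2 * n)) ℝ, M.IsSymm ∧
      (∀ i j : Fin (2 * n), i ≠ j → (M i j ≠ 0 ↔ (SimpleGraph.cycleGraph (2 * n)).Adj i j)) ∧
      ∃ g : Polynomial ℝ, M.charpoly = g ^ 2 := by
  obtain ⟨k, rfl⟩ : ∃ k, n = k + 1 := ⟨n - 1, by omega⟩
  refine ⟨cycleWitness k, cycleWitness_isSymm k,
    fun i j _ => cycleWitness_ne_zero_iff (by omega) i j, ?_⟩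
  rw [cycleWitness, charpoly_reindex]
  exact exists_charpoly_fromBlocks_eq_sq (transpose_adjMatrix _) (cornerSkew_transpose k)
end

section
/- If A and B are real symmetric matrices and the characteristic polynomial of A is the square of a real polynomial, then the characteristic polynomial of the Kronecker (tensor) product A ⊗ B is also the square of a real polynomial. -/
open Polynomial Matrix

/-! Diagonalizing `A` and `B` orthogonally diagonalizes `A ⊗ B`, so its characteristic polynomial
is `∏ⱼ ∏ᵢ (X - λᵢ μⱼ)`. Since `∏ᵢ (X - λᵢ)` is a square `g²`, the eigenvalues `λᵢ` form the multiset
`roots g + roots g`, hence each inner product over `i` is a square as well. -/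

theorem Polynomial.prod_map_eq_sq_of_prod_X_sub_C_eq_sq {R M : Type*} [CommRing R] [IsDomain R]
    [CommMonoid M] {ι : Type*} [Fintype ι] {d : ι → R} {g : R[X]}
    (h : ∏ i, (X - C (d i)) = g ^ 2) (φ : R → M) :
    ∏ i, φ (d i) = (g.roots.map φ).prod ^ 2 := by
  have hroots : Finset.univ.val.map d = g.roots + g.roots := by
    have := roots_multiset_prod_X_sub_C (Finset.univ.val.map d)
    rwa [Multiset.map_map, Function.comp_def, ← Finset.prod_eq_multiset_prod, h, roots_pow,
      two_smul, eq_comm] at this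
  rw [Finset.prod_eq_multiset_prod, ← Function.comp_def φ d, ← Multiset.map_map, hroots,
    Multiset.map_add, Multiset.prod_add, sq]

theorem Matrix.IsHermitian.charpoly_kronecker {𝕜 : Type*} [RCLike 𝕜] {n m : Type*}
    [Fintype n] [DecidableEq n] [Fintype m] [DecidableEq m] {A : Matrix n n 𝕜}
    {B : Matrix m m 𝕜} (hA : A.IsHermitian) (hB : B.IsHermitian) :
    (kroneckerMap (· * ·) A B).charpoly =
      ∏ p : n × m, (X - C ((hA.eigenvalues p.1 : 𝕜) * hB.eigenvalues p.2)) := by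
  -- `A ⊗ B = (U ⊗ V) (D ⊗ E) (U ⊗ V)⋆`; cycling `(U ⊗ V)⋆` to the front cancels the conjugation.
  conv_lhs => rw [hA.spectral_theorem, hB.spectral_theorem, Unitary.conjStarAlgAut_apply,
    Unitary.conjStarAlgAut_apply, mul_kronecker_mul, mul_kronecker_mul, charpoly_mul_comm,
    ← mul_assoc, ← mul_kronecker_mul, ← mul_kronecker_mul]
  simp [kroneckerMap_diagonal_diagonal, charpoly_diagonal]

theorem stmt_9 (n m : ℕ) (A : Matrix (Fin n) (Fin n) ℝ) (B : Matrix (Fin m) (Fin m) ℝ)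
    (hA : A.IsSymm) (hB : B.IsSymm) (h : ∃ g : Polynomial ℝ, A.charpoly = g ^ 2) :
    ∃ h : Polynomial ℝ, (Matrix.kroneckerMap (· * ·) A B).charpoly = h ^ 2 := by
  obtain ⟨g, hg⟩ := h
  have hA' : A.IsHermitian := isHermitian_iff_isSymm.mpr hA
  have hB' : B.IsHermitian := isHermitian_iff_isSymm.mpr hB
  have hsq : ∏ i, (X - C (hA'.eigenvalues i)) = g ^ 2 := by
    simpa [hA'.charpoly_eq] using hg
  refine ⟨∏ j, (g.roots.map fun r => X - C (r * hB'.eigenvalues j)).prod, ?_⟩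
  rw [hA'.charpoly_kronecker hB', Fintype.prod_prod_type_right, ← Finset.prod_pow]
  exact Finset.prod_congr rfl fun j _ =>
    prod_map_eq_sq_of_prod_X_sub_C_eq_sq hsq fun r => X - C (r * hB'.eigenvalues j)
end

section
/- Let B be a symmetric m×m real matrix with eigenvalues μ_1,...,μ_m and let u be a unit eigenvector of B for μ_1. Let A = [[A_1, b],[b^T, μ_1]] be an n×n real symmetric matrix (with (n,n) entry equal to μ_1) with eigenvalues λ_1,...,λ_n. Then the (n-1+m)×(n-1+m) matrix C = [[A_1, b u^T],[u b^T, B]] has eigenvalues λ_1,...,λ_n, μ_2,...,μ_m. -/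
/-!
Multiplying the characteristic matrix of `[[M, a uᵀ], [u cᵀ, D]]` on the right by
`[[(X - μ) I, 0], [-u cᵀ, I]]` makes it block upper triangular: `D u = μ u` and `uᵀ u = 1` kill the
lower left block. Hence `χ(C) (X - μ)^k = det((X - μ)(X - M) - a cᵀ) χ(D)`, where the first factor
does not depend on `D` or `u`. The matrix `A` is the instance `D = [μ]`, `u = 1`, and comparing the
two identities gives the claim after cancelling the monic factor `(X - μ)^k`.
-/

open Polynomial Matrix

namespace Matrix

theorem map_vecMulVec {p q α β : Type*} [NonAssocSemiring α] [NonAssocSemiring β]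
    (v : p → α) (w : q → α) (f : α →+* β) :
    (vecMulVec v w).map f = vecMulVec (f ∘ v) (f ∘ w) := by
  ext; simp [vecMulVec_apply]

theorem charpoly_unique {ι R : Type*} [Unique ι] [DecidableEq ι] [CommRing R] (μ : R) :
    (of fun _ _ => μ : Matrix ι ι R).charpoly = X - C μ := by
  simp [charpoly, det_unique]

variable {k m R : Type*} [Fintype k] [Fintype m] [DecidableEq k] [DecidableEq m] [CommRing R]

theorem det_fromBlocks_vecMulVec_mul_pow (M : Matrix k k R) (D : Matrix m m R)
    (a c : k → R) (u : m → R) (t : R) (hu : u ⬝ᵥ u = 1) (hDu : D *ᵥ u = t • u) :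
    (fromBlocks M (vecMulVec a u) (vecMulVec u c) D).det * t ^ Fintype.card k =
      (t • M - vecMulVec a c).det * D.det := by
  have hfactor : fromBlocks M (vecMulVec a u) (vecMulVec u c) D *
      fromBlocks (t • 1) 0 (-vecMulVec u c) 1 =
        fromBlocks (t • M - vecMulVec a c) (vecMulVec a u) 0 D := by
    rw [fromBlocks_multiply]
    congr 1
    · rw [Matrix.mul_smul, Matrix.mul_one, Matrix.mul_neg, vecMulVec_mul_vecMulVec, hu, one_smul,
        sub_eq_add_neg]
    · simp
    · rw [Matrix.mul_neg, mul_vecMulVec, hDu, smul_vecMulVec]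
      simp
    · simp
  have hdet := congrArg det hfactor
  rwa [det_mul, det_fromBlocks_zero₁₂, det_fromBlocks_zero₂₁, det_one, mul_one, det_smul, det_one,
    mul_one] at hdet

theorem charmatrix_mulVec_of_mulVec_eq_smul {D : Matrix m m R} {u : m → R} {μ : R}
    (hDu : D *ᵥ u = μ • u) : charmatrix D *ᵥ (C ∘ u) = (X - C μ) • (C ∘ u) := by
  have hmap : D.map C *ᵥ (C ∘ u) = C ∘ (D *ᵥ u) :=
    funext fun i => (RingHom.map_mulVec C D u i).symm
  ext1 i
  simp [charmatrix, sub_mulVec, hmap, hDu, sub_mul]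

theorem charpoly_fromBlocks_vecMulVec_mul_pow (M : Matrix k k R) (D : Matrix m m R)
    (a c : k → R) (u : m → R) (μ : R) (hu : u ⬝ᵥ u = 1) (hDu : D *ᵥ u = μ • u) :
    (fromBlocks M (vecMulVec a u) (vecMulVec u c) D).charpoly * (X - C μ) ^ Fintype.card k =
      ((X - C μ) • charmatrix M - vecMulVec (C ∘ a) (C ∘ c)).det * D.charpoly := by
  have hu' : (C ∘ u) ⬝ᵥ (C ∘ u) = 1 := by rw [← RingHom.map_dotProduct, hu, map_one]
  rw [charpoly, charmatrix_fromBlocks, map_vecMulVec, map_vecMulVec, ← neg_vecMulVec,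
    ← vecMulVec_neg, det_fromBlocks_vecMulVec_mul_pow _ _ _ _ _ _ hu'
      (charmatrix_mulVec_of_mulVec_eq_smul hDu), neg_vecMulVec, vecMulVec_neg, neg_neg, charpoly]

theorem charpoly_fromBlocks_vecMulVec_mul_X_sub_C {ι : Type*} [Unique ι] [DecidableEq ι]
    (M : Matrix k k R) (D : Matrix m m R)
    (a c : k → R) (u : m → R) (μ : R) (hu : u ⬝ᵥ u = 1) (hDu : D *ᵥ u = μ • u) :
    (fromBlocks M (vecMulVec a u) (vecMulVec u c) D).charpoly * (X - C μ) =
      (fromBlocks M (replicateCol ι a) (replicateRow ι c) (of fun _ _ => μ)).charpoly *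
        D.charpoly := by
  have hone : (1 : ι → R) ⬝ᵥ 1 = 1 := by simp [dotProduct]
  have hμ_one : (of fun _ _ => μ : Matrix ι ι R) *ᵥ 1 = μ • 1 := by ext; simp [mulVec, dotProduct]
  have hD := charpoly_fromBlocks_vecMulVec_mul_pow M D a c u μ hu hDu
  have hμ := charpoly_fromBlocks_vecMulVec_mul_pow M _ a c 1 μ hone hμ_one
  rw [vecMulVec_one, one_vecMulVec, charpoly_unique] at hμ
  apply ((monic_X_sub_C μ).pow (Fintype.card k)).isRegular.right
  linear_combination (X - C μ) * hD - D.charpoly * hμ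

end Matrix

theorem stmt_10_general (k m : ℕ) (A₁ : Matrix (Fin k) (Fin k) ℝ)
    (b : Fin k → ℝ) (μ₁ : ℝ) (B : Matrix (Fin m) (Fin m) ℝ)
    (u : Fin m → ℝ) (hu : u ⬝ᵥ u = 1) (hBu : B *ᵥ u = μ₁ • u)
    (A : Matrix (Fin k ⊕ Fin 1) (Fin k ⊕ Fin 1) ℝ)
    (hA : A = Matrix.fromBlocks A₁ (Matrix.of fun i (_ : Fin 1) => b i)
        (Matrix.of fun (_ : Fin 1) j => b j) (Matrix.of fun _ _ => μ₁))
    (C : Matrix (Fin k ⊕ Fin m) (Fin k ⊕ Fin m) ℝ)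
    (hC : C = Matrix.fromBlocks A₁ (Matrix.of fun i j => b i * u j)
        (Matrix.of fun i j => u i * b j) B) :
    C.charpoly * (X - Polynomial.C μ₁) = A.charpoly * B.charpoly := by
  subst hA hC
  exact charpoly_fromBlocks_vecMulVec_mul_X_sub_C A₁ B b b u μ₁ hu hBu

theorem stmt_10 (k m : ℕ) (A₁ : Matrix (Fin k) (Fin k) ℝ) (hA₁ : A₁.IsSymm)
    (b : Fin k → ℝ) (μ₁ : ℝ) (B : Matrix (Fin m) (Fin m) ℝ) (hB : B.IsSymm)
    (u : Fin m → ℝ) (hu : u ⬝ᵥ u = 1) (hBu : B *ᵥ u = μ₁ • u)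
    (A : Matrix (Fin k ⊕ Fin 1) (Fin k ⊕ Fin 1) ℝ)
    (hA : A = Matrix.fromBlocks A₁ (Matrix.of fun i (_ : Fin 1) => b i)
        (Matrix.of fun (_ : Fin 1) j => b j) (Matrix.of fun _ _ => μ₁))
    (C : Matrix (Fin k ⊕ Fin m) (Fin k ⊕ Fin m) ℝ)
    (hC : C = Matrix.fromBlocks A₁ (Matrix.of fun i j => b i * u j)
        (Matrix.of fun i j => u i * b j) B) :
    C.charpoly * (X - Polynomial.C μ₁) = A.charpoly * B.charpoly :=
  stmt_10_general k m A₁ b μ₁ B u hu hBu A hA C hC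
end

section
/- In the setting of the joining lemma, the eigenvectors of C = [[A_1, b u^T],[u b^T, B]] are as follows: if (v_i; α_i) is an eigenvector of A = [[A_1, b],[b^T, μ_1]] for λ_i, then (v_i; α_i u) is an eigenvector of C for λ_i; and if u_i ⊥ u is an eigenvector of B for μ_i (i ≥ 2), then (0; u_i) is an eigenvector of C for μ_i. -/
/-!
Since `u` is a unit eigenvector of `B` for `μ₁`, the map `(v, α) ↦ (v, α u)` intertwines `A` with
`C`: the rank-one blocks `b uᵀ` and `u bᵀ` act on `(v, α u)` as the border `b`, `bᵀ` of `A` acts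
on `(v, α)`, and `B` acts on `α u` as `μ₁` acts on `α`. A vector `(0, z)` with `z ⊥ u` is killed by
`b uᵀ`, so `C` acts on it as `B` does.
-/

open Matrix

theorem Sum.elim_eq_smul_elim_iff {α β γ M : Type*} [SMul M γ] {a x : α → γ} {b y : β → γ}
    (c : M) : Sum.elim a b = c • Sum.elim x y ↔ a = c • x ∧ b = c • y := by
  have : c • Sum.elim x y = Sum.elim (c • x) (c • y) := by ext (i | i) <;> rfl
  rw [this]
  exact ⟨fun h => ⟨Sum.elim_comp_inl a b ▸ h ▸ rfl, Sum.elim_comp_inr a b ▸ h ▸ rfl⟩,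
    fun ⟨ha, hb⟩ => ha ▸ hb ▸ rfl⟩

namespace Matrix

variable {R : Type*} [CommSemiring R] {n m : Type*}

theorem fromBlocks_mulVec_sumElim [Fintype n] [Fintype m] {l o : Type*} (A : Matrix l n R)
    (B : Matrix l m R) (C : Matrix o n R) (D : Matrix o m R) (x : n → R) (y : m → R) :
    fromBlocks A B C D *ᵥ Sum.elim x y = Sum.elim (A *ᵥ x + B *ᵥ y) (C *ᵥ x + D *ᵥ y) :=
  fromBlocks_mulVec A B C D _

theorem vecMulVec_mulVec_eq_dotProduct_smul [Fintype m] (u : n → R) (v w : m → R) :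
    vecMulVec u v *ᵥ w = (v ⬝ᵥ w) • u := by
  rw [vecMulVec_mulVec, op_smul_eq_smul]

theorem replicateCol_mulVec_const {ι : Type*} [Unique ι] (b : n → R) (α : R) :
    replicateCol ι b *ᵥ (fun _ => α) = α • b := by
  ext i
  simp [mulVec, dotProduct, mul_comm]

theorem bordered_mulVec_eq_smul_iff [Fintype n] {ι : Type*} [Unique ι] (A₁ : Matrix n n R)
    (b v : n → R) (μ α lam : R) :
    fromBlocks A₁ (replicateCol ι b) (replicateRow ι b) (of fun _ _ => μ) *ᵥ
        Sum.elim v (fun _ => α) = lam • Sum.elim v (fun _ => α) ↔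
      A₁ *ᵥ v + α • b = lam • v ∧ b ⬝ᵥ v + μ * α = lam * α := by
  rw [fromBlocks_mulVec_sumElim, Sum.elim_eq_smul_elim_iff, replicateCol_mulVec_const]
  refine and_congr Iff.rfl ?_
  simp [funext_iff, mulVec, dotProduct, replicateRow]

variable [Fintype n] [Fintype m] {A₁ : Matrix n n R} {B : Matrix m m R} {b : n → R} {μ : R}

theorem fromBlocks_vecMulVec_mulVec_smul_eq {v : n → R} {u : m → R} {α lam : R}
    (hu : u ⬝ᵥ u = 1) (hBu : B *ᵥ u = μ • u) (h₁ : A₁ *ᵥ v + α • b = lam • v)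
    (h₂ : b ⬝ᵥ v + μ * α = lam * α) :
    fromBlocks A₁ (vecMulVec b u) (vecMulVec u b) B *ᵥ Sum.elim v (α • u) =
      lam • Sum.elim v (α • u) := by
  rw [fromBlocks_mulVec_sumElim, Sum.elim_eq_smul_elim_iff,
    vecMulVec_mulVec_eq_dotProduct_smul, vecMulVec_mulVec_eq_dotProduct_smul, dotProduct_smul,
    hu, mulVec_smul, hBu, smul_smul, ← add_smul, mul_comm α μ, h₂, smul_eq_mul, mul_one, h₁,
    mul_smul]
  exact ⟨rfl, rfl⟩

theorem fromBlocks_vecMulVec_mulVec_sumElim_zero {u z : m → R} (hz : B *ᵥ z = μ • z)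
    (huz : u ⬝ᵥ z = 0) :
    fromBlocks A₁ (vecMulVec b u) (vecMulVec u b) B *ᵥ Sum.elim (0 : n → R) z =
      μ • Sum.elim (0 : n → R) z := by
  rw [fromBlocks_mulVec_sumElim, Sum.elim_eq_smul_elim_iff,
    vecMulVec_mulVec_eq_dotProduct_smul, huz, hz]
  simp

end Matrix

theorem stmt_11_general (k m : ℕ) (A₁ : Matrix (Fin k) (Fin k) ℝ)
    (b : Fin k → ℝ) (μ₁ : ℝ) (B : Matrix (Fin m) (Fin m) ℝ)
    (u : Fin m → ℝ) (hu : u ⬝ᵥ u = 1) (hBu : B *ᵥ u = μ₁ • u)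
    (A : Matrix (Fin k ⊕ Fin 1) (Fin k ⊕ Fin 1) ℝ)
    (hA : A = Matrix.fromBlocks A₁ (Matrix.of fun i (_ : Fin 1) => b i)
        (Matrix.of fun (_ : Fin 1) j => b j) (Matrix.of fun _ _ => μ₁))
    (C : Matrix (Fin k ⊕ Fin m) (Fin k ⊕ Fin m) ℝ)
    (hC : C = Matrix.fromBlocks A₁ (Matrix.of fun i j => b i * u j)
        (Matrix.of fun i j => u i * b j) B) :
    (∀ (v : Fin k → ℝ) (α lam : ℝ),
      A *ᵥ Sum.elim v (fun _ => α) = lam • Sum.elim v (fun _ => α) →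
      C *ᵥ Sum.elim v (fun i => α * u i) = lam • Sum.elim v (fun i => α * u i)) ∧
    (∀ (z : Fin m → ℝ) (μ : ℝ),
      B *ᵥ z = μ • z → u ⬝ᵥ z = 0 →
      C *ᵥ Sum.elim (0 : Fin k → ℝ) z = μ • Sum.elim (0 : Fin k → ℝ) z) := by
  subst hA hC
  refine ⟨fun v α lam h => ?_, fun z μ hz huz => fromBlocks_vecMulVec_mulVec_sumElim_zero hz huz⟩
  obtain ⟨h₁, h₂⟩ := (bordered_mulVec_eq_smul_iff (ι := Fin 1) A₁ b v μ₁ α lam).1 h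
  exact fromBlocks_vecMulVec_mulVec_smul_eq hu hBu h₁ h₂

theorem stmt_11 (k m : ℕ) (A₁ : Matrix (Fin k) (Fin k) ℝ) (hA₁ : A₁.IsSymm)
    (b : Fin k → ℝ) (μ₁ : ℝ) (B : Matrix (Fin m) (Fin m) ℝ) (hB : B.IsSymm)
    (u : Fin m → ℝ) (hu : u ⬝ᵥ u = 1) (hBu : B *ᵥ u = μ₁ • u)
    (A : Matrix (Fin k ⊕ Fin 1) (Fin k ⊕ Fin 1) ℝ)
    (hA : A = Matrix.fromBlocks A₁ (Matrix.of fun i (_ : Fin 1) => b i)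
        (Matrix.of fun (_ : Fin 1) j => b j) (Matrix.of fun _ _ => μ₁))
    (C : Matrix (Fin k ⊕ Fin m) (Fin k ⊕ Fin m) ℝ)
    (hC : C = Matrix.fromBlocks A₁ (Matrix.of fun i j => b i * u j)
        (Matrix.of fun i j => u i * b j) B) :
    (∀ (v : Fin k → ℝ) (α lam : ℝ),
      A *ᵥ Sum.elim v (fun _ => α) = lam • Sum.elim v (fun _ => α) →
      C *ᵥ Sum.elim v (fun i => α * u i) = lam • Sum.elim v (fun i => α * u i)) ∧
    (∀ (z : Fin m → ℝ) (μ : ℝ),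
      B *ᵥ z = μ • z → u ⬝ᵥ z = 0 →
      C *ᵥ Sum.elim (0 : Fin k → ℝ) z = μ • Sum.elim (0 : Fin k → ℝ) z) :=
  stmt_11_general k m A₁ b μ₁ B u hu hBu A hA C hC
end

section
/- Let G be a graph on n vertices that allows the characteristic polynomial a square (there exists A ∈ S(G) with characteristic polynomial a square of a real polynomial). Fix a vertex v of G and m ≥ 0, and let G' be the graph obtained from G by replacing v with a clique K_{2m+1}, each of whose vertices is adjacent to exactly the neighbours of v in G. Then G' allows the characteristic polynomial a square. -/
/-!
Let `π : n ⊕ k → n` collapse the clique `{inl v} ∪ k` onto `v`, and let `P` be the `(n ⊕ k) × n`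
matrix with entry `w p` at `(p, π p)`, where `w = t` on the clique and `1` elsewhere. When
`t² (|k| + 1) = 1` the columns of `P` are orthonormal, `Pᵀ P = 1`, so
`charpoly (P B Pᵀ) = X ^ |k| * charpoly (B Pᵀ P) = X ^ |k| * charpoly B`. Taking `B = A - d` and
shifting back by `d` gives `charpoly (P (A - d) Pᵀ + d) = (X - d) ^ |k| * charpoly A`, a square when
`|k| = 2m` and `charpoly A` is one. Entrywise the new matrix is `w p w q (A - d) (π p) (π q)` off
the diagonal, so for `t ≠ 0` and `d ≠ A v v` it has the pattern of the blown-up graph.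
-/

open Polynomial

namespace Matrix

variable {m n R : Type*} [DecidableEq n] [CommRing R]

theorem charpoly_add_scalar [Fintype n] (M : Matrix n n R) (d : R) :
    (M + scalar n d).charpoly = M.charpoly.comp (X - C d) := by
  simpa [sub_eq_add_neg] using charpoly_sub_scalar M (-d)

theorem charpoly_mul_mul_transpose_add_scalar [Fintype m] [Fintype n] [DecidableEq m]
    {P : Matrix m n R} (hP : Pᵀ * P = 1) (hle : Fintype.card n ≤ Fintype.card m)
    (B : Matrix n n R) (d : R) :
    (P * B * Pᵀ + scalar m d).charpoly =
      (X - C d) ^ (Fintype.card m - Fintype.card n) * (B + scalar n d).charpoly := by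
  rw [charpoly_add_scalar, charpoly_add_scalar, Matrix.mul_assoc,
    charpoly_mul_comm_of_le _ _ hle, Matrix.mul_assoc, hP, Matrix.mul_one, mul_comp, X_pow_comp]

def weightedSelection (f : m → n) (w : m → R) : Matrix m n R :=
  of fun p i => if f p = i then w p else 0

theorem weightedSelection_mul_mul_transpose_apply [Fintype n] (f : m → n) (w : m → R)
    (B : Matrix n n R) (p q : m) :
    (weightedSelection f w * B * (weightedSelection f w)ᵀ) p q = w p * B (f p) (f q) * w q := by
  simp [weightedSelection, mul_apply, ite_mul, mul_ite]

theorem transpose_weightedSelection_mul_self [Fintype m] (f : m → n) (w : m → R) :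
    (weightedSelection f w)ᵀ * weightedSelection f w =
      diagonal fun i => ∑ p, if f p = i then w p ^ 2 else 0 := by
  ext i j
  simp only [weightedSelection, mul_apply, transpose_apply, of_apply, diagonal_apply]
  split_ifs with hij
  · subst hij
    exact Finset.sum_congr rfl fun p _ => by split_ifs <;> ring
  · exact Finset.sum_eq_zero fun p _ => by split_ifs with hi hj <;> simp_all

end Matrix

section CliqueBlowup

open Matrix

variable {n k R : Type*} [Fintype n] [Fintype k] [DecidableEq n] [CommRing R]

def cliqueCollapse (v : n) : n ⊕ k → n :=
  Sum.elim id fun _ => v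

def cliqueWeight (v : n) (t : R) : n ⊕ k → R :=
  Sum.elim (fun i => if i = v then t else 1) fun _ => t

theorem transpose_weightedSelection_cliqueCollapse_mul_self {v : n} {t : R}
    (ht : t ^ 2 * (Fintype.card k + 1) = 1) :
    (weightedSelection (cliqueCollapse (k := k) v) (cliqueWeight v t))ᵀ *
      weightedSelection (cliqueCollapse (k := k) v) (cliqueWeight v t) = 1 := by
  rw [transpose_weightedSelection_mul_self, ← diagonal_one]
  congr 1
  ext i
  by_cases hi : i = v
  · subst hi
    simp only [cliqueCollapse, cliqueWeight, Fintype.sum_sum_type, Sum.elim_inl, id_eq, ite_pow,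
      one_pow, Finset.sum_ite_eq', Finset.mem_univ, ↓reduceIte, Sum.elim_inr, Finset.sum_const,
      Finset.card_univ, nsmul_eq_mul]
    linear_combination ht
  · simp [cliqueCollapse, cliqueWeight, hi, Ne.symm hi]

variable [DecidableEq k]

def cliqueBlowup (A : Matrix n n R) (v : n) (t d : R) : Matrix (n ⊕ k) (n ⊕ k) R :=
  weightedSelection (cliqueCollapse v) (cliqueWeight v t) * (A - scalar n d) *
    (weightedSelection (cliqueCollapse v) (cliqueWeight v t))ᵀ + scalar (n ⊕ k) d

variable {A : Matrix n n R} {v : n} {t d : R}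

theorem cliqueBlowup_isSymm (hA : A.IsSymm) : (cliqueBlowup (k := k) A v t d).IsSymm := by
  refine IsSymm.add ?_ (isSymm_diagonal _)
  simp [IsSymm, transpose_mul, Matrix.mul_assoc, (hA.sub (isSymm_diagonal _)).eq]

theorem charpoly_cliqueBlowup (ht : t ^ 2 * (Fintype.card k + 1) = 1) :
    (cliqueBlowup (k := k) A v t d).charpoly = (X - C d) ^ Fintype.card k * A.charpoly := by
  rw [cliqueBlowup, charpoly_mul_mul_transpose_add_scalar
    (transpose_weightedSelection_cliqueCollapse_mul_self ht) (by simp), sub_add_cancel]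
  simp

theorem cliqueBlowup_inl_inl {i j : n} (hij : i ≠ j) :
    cliqueBlowup (k := k) A v t d (.inl i) (.inl j) =
      (if i = v then t else 1) * A i j * (if j = v then t else 1) := by
  simp [cliqueBlowup, weightedSelection_mul_mul_transpose_apply, cliqueCollapse, cliqueWeight, hij]

theorem cliqueBlowup_inl_inr (i : n) (j : k) :
    cliqueBlowup A v t d (.inl i) (.inr j) =
      (if i = v then t else 1) * (A i v - if i = v then d else 0) * t := by
  simp [cliqueBlowup, weightedSelection_mul_mul_transpose_apply, cliqueCollapse, cliqueWeight,
    diagonal_apply]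

theorem cliqueBlowup_inr_inr {i j : k} (hij : i ≠ j) :
    cliqueBlowup A v t d (.inr i) (.inr j) = t * (A v v - d) * t := by
  simp [cliqueBlowup, weightedSelection_mul_mul_transpose_apply, cliqueCollapse, cliqueWeight, hij]

variable [NoZeroDivisors R]

theorem cliqueBlowup_inl_inl_ne_zero_iff (ht : t ≠ 0) {i j : n} (hij : i ≠ j) :
    cliqueBlowup (k := k) A v t d (.inl i) (.inl j) ≠ 0 ↔ A i j ≠ 0 := by
  rw [cliqueBlowup_inl_inl hij]
  split_ifs <;> simp [ht]

theorem cliqueBlowup_inl_inr_ne_zero_iff (ht : t ≠ 0) (hd : A v v ≠ d) (i : n) (j : k) :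
    cliqueBlowup A v t d (.inl i) (.inr j) ≠ 0 ↔ A i v ≠ 0 ∨ i = v := by
  rw [cliqueBlowup_inl_inr]
  by_cases hi : i = v
  · subst hi
    simp [ht, sub_ne_zero.mpr hd]
  · simp [ht, hi]

theorem cliqueBlowup_inr_inr_ne_zero (ht : t ≠ 0) (hd : A v v ≠ d) {i j : k} (hij : i ≠ j) :
    cliqueBlowup A v t d (.inr i) (.inr j) ≠ 0 := by
  rw [cliqueBlowup_inr_inr hij]
  simp [ht, sub_ne_zero.mpr hd]

end CliqueBlowup

theorem stmt_12 (n m : ℕ) (G : SimpleGraph (Fin n)) (v : Fin n)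
    (h : ∃ A : Matrix (Fin n) (Fin n) ℝ, A.IsSymm ∧
      (∀ i j : Fin n, i ≠ j → (A i j ≠ 0 ↔ G.Adj i j)) ∧
      ∃ g : Polynomial ℝ, A.charpoly = g ^ 2) :
    ∃ C : Matrix (Fin n ⊕ Fin (2 * m)) (Fin n ⊕ Fin (2 * m)) ℝ, C.IsSymm ∧
      (∀ i j : Fin n, i ≠ j → (C (Sum.inl i) (Sum.inl j) ≠ 0 ↔ G.Adj i j)) ∧
      (∀ (i : Fin n) (j : Fin (2 * m)),
        C (Sum.inl i) (Sum.inr j) ≠ 0 ↔ (G.Adj i v ∨ i = v)) ∧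
      (∀ i j : Fin (2 * m), i ≠ j → C (Sum.inr i) (Sum.inr j) ≠ 0) ∧
      ∃ g : Polynomial ℝ, C.charpoly = g ^ 2 := by
  obtain ⟨A, hA, hAG, g, hg⟩ := h
  set t : ℝ := (√(2 * m + 1))⁻¹
  have ht : t ^ 2 * (Fintype.card (Fin (2 * m)) + 1) = 1 := by
    simp only [t, inv_pow, Fintype.card_fin, Nat.cast_mul, Nat.cast_ofNat]
    rw [Real.sq_sqrt (by positivity), inv_mul_cancel₀ (by positivity)]
  have ht0 : t ≠ 0 := inv_ne_zero (Real.sqrt_ne_zero'.mpr (by positivity))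
  have hd : A v v ≠ A v v - 1 := by linarith
  refine ⟨cliqueBlowup A v t (A v v - 1), cliqueBlowup_isSymm hA,
    fun i j hij => (cliqueBlowup_inl_inl_ne_zero_iff ht0 hij).trans (hAG i j hij),
    fun i j => ?_, fun i j hij => cliqueBlowup_inr_inr_ne_zero ht0 hd hij,
    g * (X - C (A v v - 1)) ^ m, ?_⟩
  · rw [cliqueBlowup_inl_inr_ne_zero_iff ht0 hd]
    by_cases hi : i = v
    · simp [hi]
    · simp [hi, hAG i v hi]
  · rw [charpoly_cliqueBlowup ht, hg, Fintype.card_fin]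
    ring
end

section
/- Let A = [[A_1, a],[a^T, 2]] be symmetric with characteristic polynomial p(x), and B = [[B_1, b],[b^T, 0]] symmetric with characteristic polynomial q(x). Then the symmetric matrix C = [[B_1, 0, (√2/2)b, -(√2/2)b], [0, A_1, (√2/2)a, (√2/2)a], [(√2/2)b^T, (√2/2)a^T, 1, 1], [-(√2/2)b^T, (√2/2)a^T, 1, 1]] has characteristic polynomial p(x)·q(x). -/
/-!
After conjugating the last two coordinates by the orthogonal involution
`H = (√2/2) [[1, 1], [1, -1]]`, the matrix `C` becomes `[[B₁, 0, 0, b], [0, A₁, a, 0], [0, aᵀ, 2, 0],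
[bᵀ, 0, 0, 0]]`, which is a simultaneous permutation of rows and columns of the block-diagonal
matrix `A ⊕ B`. Both operations preserve the characteristic polynomial.
-/

open Polynomial Matrix

namespace Matrix

variable {R : Type*} [CommRing R]

theorem charpoly_conj_of_mul_self_eq_one {n : Type*} [Fintype n] [DecidableEq n]
    {U : Matrix n n R} (hU : U * U = 1) (M : Matrix n n R) :
    (U * M * U).charpoly = M.charpoly := by
  rw [charpoly_mul_comm, ← Matrix.mul_assoc, hU, Matrix.one_mul]

theorem fromBlocks_one_zero_zero_conj {m n : Type*} [Fintype m] [Fintype n] [DecidableEq m]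
    (H : Matrix n n R) (M₁₁ : Matrix m m R) (M₁₂ : Matrix m n R) (M₂₁ : Matrix n m R)
    (M₂₂ : Matrix n n R) :
    fromBlocks 1 0 0 H * fromBlocks M₁₁ M₁₂ M₂₁ M₂₂ * fromBlocks 1 0 0 H =
      fromBlocks M₁₁ (M₁₂ * H) (H * M₂₁) (H * M₂₂ * H) := by
  simp only [fromBlocks_multiply, Matrix.one_mul, Matrix.mul_one, Matrix.zero_mul,
    Matrix.mul_zero, add_zero, zero_add]

theorem charpoly_fromBlocks_interleave {k l p q : Type*} [Fintype k] [Fintype l] [Fintype p]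
    [Fintype q] [DecidableEq k] [DecidableEq l] [DecidableEq p] [DecidableEq q]
    (P₁₁ : Matrix k k R) (P₁₂ : Matrix k p R) (P₂₁ : Matrix p k R) (P₂₂ : Matrix p p R)
    (Q₁₁ : Matrix l l R) (Q₁₂ : Matrix l q R) (Q₂₁ : Matrix q l R) (Q₂₂ : Matrix q q R) :
    (fromBlocks (fromBlocks Q₁₁ 0 0 P₁₁) (fromBlocks 0 Q₁₂ P₁₂ 0) (fromBlocks 0 P₂₁ Q₂₁ 0)
        (fromBlocks P₂₂ 0 0 Q₂₂)).charpoly =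
      (fromBlocks P₁₁ P₁₂ P₂₁ P₂₂).charpoly * (fromBlocks Q₁₁ Q₁₂ Q₂₁ Q₂₂).charpoly := by
  let e := (Equiv.sumSumSumComm k p l q).trans (Equiv.sumCongr (Equiv.sumComm k l) (.refl _))
  have hperm : reindex e e (fromBlocks (fromBlocks P₁₁ P₁₂ P₂₁ P₂₂) 0 0
      (fromBlocks Q₁₁ Q₁₂ Q₂₁ Q₂₂)) =
      fromBlocks (fromBlocks Q₁₁ 0 0 P₁₁) (fromBlocks 0 Q₁₂ P₁₂ 0) (fromBlocks 0 P₂₁ Q₂₁ 0)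
        (fromBlocks P₂₂ 0 0 Q₂₂) := by
    ext ((i | i) | (i | i)) ((j | j) | (j | j)) <;> simp [e, Equiv.sumSumSumComm]
  rw [← hperm, charpoly_reindex, charpoly_fromBlocks_zero₂₁]

def hadamardTwo (s : R) : Matrix (Fin 1 ⊕ Fin 1) (Fin 1 ⊕ Fin 1) R :=
  fromBlocks (of fun _ _ => s) (of fun _ _ => s) (of fun _ _ => s) (of fun _ _ => -s)

variable {s : R}

theorem hadamardTwo_mul_self (hs : 2 * (s * s) = 1) : hadamardTwo s * hadamardTwo s = 1 := by
  ext (i | i) (j | j) <;> simp [hadamardTwo, mul_apply, one_apply, Subsingleton.elim i j] <;>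
    linear_combination hs

theorem fromBlocks_col_mul_hadamardTwo {m n : Type*} (u : m → R) (v : n → R) :
    fromBlocks 0 (of fun i (_ : Fin 1) => u i) (of fun i (_ : Fin 1) => v i) 0 * hadamardTwo s =
      fromBlocks (of fun i _ => s * u i) (of fun i _ => -s * u i)
        (of fun i _ => s * v i) (of fun i _ => s * v i) := by
  ext (i | i) (j | j) <;> simp [hadamardTwo, mul_apply, mul_comm]

theorem hadamardTwo_mul_fromBlocks_row {m n : Type*} (u : m → R) (v : n → R) :
    hadamardTwo s * fromBlocks 0 (of fun (_ : Fin 1) j => v j) (of fun (_ : Fin 1) j => u j) 0 =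
      fromBlocks (of fun _ j => s * u j) (of fun _ j => s * v j)
        (of fun _ j => -s * u j) (of fun _ j => s * v j) := by
  ext (i | i) (j | j) <;> simp [hadamardTwo, mul_apply]

theorem hadamardTwo_conj_two_zero (hs : 2 * (s * s) = 1) :
    hadamardTwo s * fromBlocks (of fun _ _ => 2) 0 0 (of fun _ _ => 0) * hadamardTwo s =
      of fun (_ : Fin 1 ⊕ Fin 1) (_ : Fin 1 ⊕ Fin 1) => (1 : R) := by
  ext (i | i) (j | j) <;> simp [hadamardTwo, mul_apply] <;> linear_combination hs

end Matrix

theorem stmt_13_general (k l : ℕ) (A₁ : Matrix (Fin k) (Fin k) ℝ) (a : Fin k → ℝ)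
    (B₁ : Matrix (Fin l) (Fin l) ℝ) (b : Fin l → ℝ)
    (A : Matrix (Fin k ⊕ Fin 1) (Fin k ⊕ Fin 1) ℝ)
    (hA : A = Matrix.fromBlocks A₁ (Matrix.of fun i (_ : Fin 1) => a i)
        (Matrix.of fun (_ : Fin 1) j => a j) (Matrix.of fun _ _ => (2 : ℝ)))
    (B : Matrix (Fin l ⊕ Fin 1) (Fin l ⊕ Fin 1) ℝ)
    (hB : B = Matrix.fromBlocks B₁ (Matrix.of fun i (_ : Fin 1) => b i)
        (Matrix.of fun (_ : Fin 1) j => b j) (Matrix.of fun _ _ => (0 : ℝ)))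
    (C : Matrix ((Fin l ⊕ Fin k) ⊕ (Fin 1 ⊕ Fin 1)) ((Fin l ⊕ Fin k) ⊕ (Fin 1 ⊕ Fin 1)) ℝ)
    (hC : C = Matrix.fromBlocks
      (Matrix.fromBlocks B₁ 0 0 A₁)
      (Matrix.fromBlocks
        (Matrix.of fun i (_ : Fin 1) => Real.sqrt 2 / 2 * b i)
        (Matrix.of fun i (_ : Fin 1) => -(Real.sqrt 2 / 2) * b i)
        (Matrix.of fun i (_ : Fin 1) => Real.sqrt 2 / 2 * a i)
        (Matrix.of fun i (_ : Fin 1) => Real.sqrt 2 / 2 * a i))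
      (Matrix.fromBlocks
        (Matrix.of fun (_ : Fin 1) j => Real.sqrt 2 / 2 * b j)
        (Matrix.of fun (_ : Fin 1) j => Real.sqrt 2 / 2 * a j)
        (Matrix.of fun (_ : Fin 1) j => -(Real.sqrt 2 / 2) * b j)
        (Matrix.of fun (_ : Fin 1) j => Real.sqrt 2 / 2 * a j))
      (Matrix.of fun (_ : Fin 1 ⊕ Fin 1) (_ : Fin 1 ⊕ Fin 1) => (1 : ℝ))) :
    C.charpoly = A.charpoly * B.charpoly := by
  have hs : 2 * (Real.sqrt 2 / 2 * (Real.sqrt 2 / 2)) = 1 := by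
    rw [div_mul_div_comm, Real.mul_self_sqrt zero_le_two]; norm_num
  have hU : fromBlocks (1 : Matrix (Fin l ⊕ Fin k) (Fin l ⊕ Fin k) ℝ) 0 0
      (hadamardTwo (Real.sqrt 2 / 2)) * fromBlocks 1 0 0 (hadamardTwo (Real.sqrt 2 / 2)) = 1 := by
    rw [fromBlocks_multiply, hadamardTwo_mul_self hs]; simp
  subst hA hB hC
  rw [← charpoly_fromBlocks_interleave]
  conv_rhs => rw [← charpoly_conj_of_mul_self_eq_one hU]
  rw [fromBlocks_one_zero_zero_conj, fromBlocks_col_mul_hadamardTwo, hadamardTwo_mul_fromBlocks_row,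
    hadamardTwo_conj_two_zero hs]

theorem stmt_13 (k l : ℕ) (A₁ : Matrix (Fin k) (Fin k) ℝ) (hA₁ : A₁.IsSymm) (a : Fin k → ℝ)
    (B₁ : Matrix (Fin l) (Fin l) ℝ) (hB₁ : B₁.IsSymm) (b : Fin l → ℝ)
    (A : Matrix (Fin k ⊕ Fin 1) (Fin k ⊕ Fin 1) ℝ)
    (hA : A = Matrix.fromBlocks A₁ (Matrix.of fun i (_ : Fin 1) => a i)
        (Matrix.of fun (_ : Fin 1) j => a j) (Matrix.of fun _ _ => (2 : ℝ)))
    (B : Matrix (Fin l ⊕ Fin 1) (Fin l ⊕ Fin 1) ℝ)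
    (hB : B = Matrix.fromBlocks B₁ (Matrix.of fun i (_ : Fin 1) => b i)
        (Matrix.of fun (_ : Fin 1) j => b j) (Matrix.of fun _ _ => (0 : ℝ)))
    (C : Matrix ((Fin l ⊕ Fin k) ⊕ (Fin 1 ⊕ Fin 1)) ((Fin l ⊕ Fin k) ⊕ (Fin 1 ⊕ Fin 1)) ℝ)
    (hC : C = Matrix.fromBlocks
      (Matrix.fromBlocks B₁ 0 0 A₁)
      (Matrix.fromBlocks
        (Matrix.of fun i (_ : Fin 1) => Real.sqrt 2 / 2 * b i)
        (Matrix.of fun i (_ : Fin 1) => -(Real.sqrt 2 / 2) * b i)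
        (Matrix.of fun i (_ : Fin 1) => Real.sqrt 2 / 2 * a i)
        (Matrix.of fun i (_ : Fin 1) => Real.sqrt 2 / 2 * a i))
      (Matrix.fromBlocks
        (Matrix.of fun (_ : Fin 1) j => Real.sqrt 2 / 2 * b j)
        (Matrix.of fun (_ : Fin 1) j => Real.sqrt 2 / 2 * a j)
        (Matrix.of fun (_ : Fin 1) j => -(Real.sqrt 2 / 2) * b j)
        (Matrix.of fun (_ : Fin 1) j => Real.sqrt 2 / 2 * a j))
      (Matrix.of fun (_ : Fin 1 ⊕ Fin 1) (_ : Fin 1 ⊕ Fin 1) => (1 : ℝ))) :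
    C.charpoly = A.charpoly * B.charpoly :=
  stmt_13_general k l A₁ a B₁ b A hA B hB C hC
end

section
/- For any list of real numbers λ_1, λ_2, ..., λ_n with λ_1 ≠ λ_2 and n ≥ 2, there exists a real symmetric n×n matrix A all of whose off-diagonal entries are nonzero (i.e., A ∈ S(K_n)) whose spectrum is exactly {λ_1,...,λ_n} (with multiplicity). -/
/-!
Conjugate `diagonal λ` by a Householder reflection `H = 1 - 2 v vᵀ` with `‖v‖ = 1`. Since `H` is
a symmetric involution, `H * diagonal λ * H` is symmetric with spectrum `λ`, and for `i ≠ j` its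
`(i, j)` entry is `2 vᵢ vⱼ (2 s - λᵢ - λⱼ)` with `s = ∑ₖ λₖ vₖ²`. So it suffices to pick `v` with
positive entries whose weights `vₖ²` put the average `s` of `λ` outside the finite set of
midpoints `(λᵢ + λⱼ) / 2`; as `λ` is not constant, `s` ranges over infinitely many values.
-/

open Polynomial Matrix Finset

namespace Matrix

variable {ι R : Type*} [Fintype ι] [DecidableEq ι] [CommRing R]

def householder (v : ι → R) : Matrix ι ι R := 1 - (2 : R) • vecMulVec v v

omit [Fintype ι] in
theorem householder_transpose (v : ι → R) : (householder v)ᵀ = householder v := by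
  simp [householder, transpose_vecMulVec]

theorem householder_mul_self {v : ι → R} (hv : v ⬝ᵥ v = 1) :
    householder v * householder v = 1 := by
  have hP : vecMulVec v v * vecMulVec v v = vecMulVec v v := by
    rw [vecMulVec_mul_vecMulVec, hv, one_smul]
  simp only [householder, sub_mul, mul_sub, one_mul, mul_one, smul_mul_smul_comm, hP]
  module

theorem householder_mul_diagonal_mul_householder_apply_of_ne (v d : ι → R) {i j : ι}
    (hij : i ≠ j) : (householder v * diagonal d * householder v) i j =
      2 * v i * v j * (2 * ∑ k, d k * v k ^ 2 - d i - d j) := by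
  simp only [householder, sub_mul, mul_sub, one_mul, mul_one, smul_mul_assoc, mul_smul_comm,
    vecMulVec_mul, mul_vecMulVec, vecMulVec_mulVec, sub_apply, smul_apply,
    diagonal_apply_ne _ hij, vecMulVec_apply, vecMul_diagonal, mulVec_diagonal, dotProduct,
    Pi.smul_apply, op_smul_eq_mul, smul_eq_mul]
  rw [show ∑ k, v k * d k * v k = ∑ k, d k * v k ^ 2 from sum_congr rfl fun k _ => by ring]
  ring

theorem charpoly_mul_mul_of_mul_self_eq_one {Q : Matrix ι ι R} (hQ : Q * Q = 1)
    (M : Matrix ι ι R) : (Q * M * Q).charpoly = M.charpoly := by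
  rw [mul_assoc, charpoly_mul_comm, mul_assoc, hQ, mul_one]

end Matrix

variable {ι : Type*} [Fintype ι] [DecidableEq ι]

theorem exists_pos_sum_eq_one_sum_mul_notMem (d : ι → ℝ) {a b : ι} (hab : d a ≠ d b)
    (S : Finset ℝ) : ∃ w : ι → ℝ, (∀ k, 0 < w k) ∧ ∑ k, w k = 1 ∧ ∑ k, w k * d k ∉ S := by
  have hN : (0 : ℝ) < Fintype.card ι := by
    have : Nonempty ι := ⟨a⟩
    exact_mod_cast Fintype.card_pos
  set m := (∑ k, d k) / Fintype.card ι
  obtain ⟨c, hc⟩ : ∃ c, d c ≠ m := by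
    by_contra! h
    exact hab ((h a).trans (h b).symm)
  -- move from the uniform weights towards the vertex `c` of the simplex
  let w : ℝ → ι → ℝ := fun t k => (1 - t) / Fintype.card ι + if k = c then t else 0
  have hw_sum (t : ℝ) : ∑ k, w t k = 1 := by
    simp only [w, sum_add_distrib, sum_const, card_univ, sum_ite_eq', mem_univ, if_true,
      nsmul_eq_mul]
    field_simp
    ring
  have hw_mul_sum (t : ℝ) : ∑ k, w t k * d k = m + t * (d c - m) := by
    simp only [w, add_mul, sum_add_distrib, ite_mul, zero_mul, sum_ite_eq', mem_univ, if_true,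
      ← mul_sum, m]
    field_simp
    ring
  have hinj : Function.Injective fun t => m + t * (d c - m) := fun s t hst => by
    simpa [sub_ne_zero.mpr hc] using hst
  obtain ⟨t, ⟨⟨ht0, ht1⟩, htS⟩⟩ := ((Set.Ioo_infinite zero_lt_one).sdiff
    (S.finite_toSet.preimage hinj.injOn)).nonempty
  refine ⟨w t, fun k => ?_, hw_sum t, by simpa [hw_mul_sum] using htS⟩
  exact add_pos_of_pos_of_nonneg (div_pos (by linarith) hN) (by split_ifs <;> linarith)

theorem exists_householder_conj_diagonal_apply_ne_zero (d : ι → ℝ) {a b : ι}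
    (hab : d a ≠ d b) : ∃ v : ι → ℝ, v ⬝ᵥ v = 1 ∧
      ∀ i j, i ≠ j → (householder v * diagonal d * householder v) i j ≠ 0 := by
  obtain ⟨w, hw_pos, hw_sum, hw_avoid⟩ := exists_pos_sum_eq_one_sum_mul_notMem d hab
    (univ.image fun p : ι × ι => (d p.1 + d p.2) / 2)
  let v k := √(w k)
  have hv_sq (k : ι) : v k ^ 2 = w k := Real.sq_sqrt (hw_pos k).le
  refine ⟨v, by simpa [dotProduct, ← sq, hv_sq] using hw_sum, fun i j hij => ?_⟩
  rw [householder_mul_diagonal_mul_householder_apply_of_ne _ _ hij]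
  have hmid : 2 * ∑ k, d k * v k ^ 2 - d i - d j ≠ 0 := fun h => hw_avoid <|
    mem_image.mpr ⟨(i, j), mem_univ _, by simp only [hv_sq, mul_comm (d _)] at h; linarith⟩
  have hv_ne (k : ι) : v k ≠ 0 := (Real.sqrt_pos.mpr (hw_pos k)).ne'
  exact mul_ne_zero (mul_ne_zero (mul_ne_zero two_ne_zero (hv_ne i)) (hv_ne j)) hmid

theorem stmt_14 (n : ℕ) (hn : 2 ≤ n) (lam : Fin n → ℝ)
    (hlam : lam ⟨0, by omega⟩ ≠ lam ⟨1, by omega⟩) :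
    ∃ A : Matrix (Fin n) (Fin n) ℝ, A.IsSymm ∧
      (∀ i j : Fin n, i ≠ j → A i j ≠ 0) ∧
      A.charpoly = ∏ i : Fin n, (X - Polynomial.C (lam i)) := by
  obtain ⟨v, hv, hA⟩ := exists_householder_conj_diagonal_apply_ne_zero lam hlam
  refine ⟨householder v * diagonal lam * householder v, ?_, hA, ?_⟩
  · simp [IsSymm, householder_transpose, mul_assoc]
  · rw [charpoly_mul_mul_of_mul_self_eq_one (householder_mul_self hv), charpoly_diagonal]
end

section
/- For every m ≥ 2, the complete graph K_{2m} allows the characteristic polynomial a square: there exists a real symmetric 2m×2m matrix with all off-diagonal entries nonzero whose characteristic polynomial is the square of a real polynomial. -/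
/-!
The block matrix `[[B, C], [C, B]]` is similar to `diag (B + C, B - C)`, so its characteristic
polynomial is `χ(B + C) χ(B - C)`, a square as soon as `B + C` and `B - C` are cospectral.
Take `B = J + m E₀₀` and `C = J - m E₀₀` with `J` the all-ones matrix: then `B + C = 2J` and
`B - C = 2m E₀₀` are rank-one matrices of the same trace `2m`, hence both have characteristic
polynomial `X ^ m - 2m X ^ (m - 1)`, while all entries of `B` and `C` are nonzero because `m ≠ 1`.
-/

open Polynomial Matrix

namespace Matrix

variable {n R : Type*} [Fintype n] [DecidableEq n]

section CommRing

variable [CommRing R]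

theorem det_fromBlocks_self_swap (P Q : Matrix n n R) :
    (fromBlocks P Q Q P).det = (P + Q).det * (P - Q).det := by
  have hL : (fromBlocks 1 0 (-1) 1 : Matrix (n ⊕ n) (n ⊕ n) R).det = 1 := by simp
  have hR : (fromBlocks 1 0 1 1 : Matrix (n ⊕ n) (n ⊕ n) R).det = 1 := by simp
  have hconj : fromBlocks 1 0 (-1) 1 * fromBlocks P Q Q P * fromBlocks 1 0 1 1 =
      fromBlocks (P + Q) Q 0 (P - Q) := by
    simp only [fromBlocks_multiply]
    congr 1 <;> simp; abel
  simpa [hL, hR] using congrArg det hconj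

theorem charpoly_fromBlocks_self_swap (B C : Matrix n n R) :
    (fromBlocks B C C B).charpoly = (B + C).charpoly * (B - C).charpoly := by
  have hadd : charmatrix (B + C) = charmatrix B + -C.map Polynomial.C := by
    simp only [charmatrix, map_add, RingHom.mapMatrix_apply]; abel
  have hsub : charmatrix (B - C) = charmatrix B - -C.map Polynomial.C := by
    simp only [charmatrix, map_sub, RingHom.mapMatrix_apply]; abel
  rw [charpoly, charmatrix_fromBlocks, det_fromBlocks_self_swap, charpoly, charpoly, hadd, hsub]

theorem charpoly_of_const_eq_charpoly_single (c : R) (i : n) :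
    (of fun _ _ : n => c).charpoly = (single i i (Fintype.card n • c)).charpoly := by
  have hconst : (of fun _ _ : n => c) = vecMulVec (fun _ => c) 1 := by
    ext; simp [vecMulVec]
  have hsingle : single i i (Fintype.card n • c) =
      vecMulVec (Pi.single i 1) (Pi.single i (Fintype.card n • c)) := by
    ext a b
    by_cases ha : a = i <;> by_cases hb : b = i <;> simp [ha, hb, Ne.symm, vecMulVec]
  rw [hconst, hsingle, charpoly_vecMulVec, charpoly_vecMulVec, dotProduct_single]
  simp [dotProduct]

end CommRing

variable (n R) [Field R] [LinearOrder R] [IsStrictOrderedRing R]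

theorem exists_isSymm_forall_ne_zero_charpoly_eq_sq [Nontrivial n] :
    ∃ A : Matrix (n ⊕ n) (n ⊕ n) R, A.IsSymm ∧ (∀ i j, A i j ≠ 0) ∧
      ∃ g : R[X], A.charpoly = g ^ 2 := by
  obtain ⟨i₀⟩ : Nonempty n := inferInstance
  let J : Matrix n n R := of fun _ _ => 1
  let E : Matrix n n R := single i₀ i₀ (Fintype.card n : R)
  have hJ : J.IsSymm := rfl
  have hE : E.IsSymm := transpose_single _ _ _
  have hsum : (J + E) + (J - E) = of fun _ _ => 2 := by
    ext; simp [J]; norm_num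
  have hdiff : (J + E) - (J - E) = single i₀ i₀ (Fintype.card n • (2 : R)) := by
    ext a b; simp [E, single_apply]; split_ifs <;> ring
  have hB : ∀ a b, (J + E) a b ≠ 0 := by
    intro a b; simp [J, E, single_apply]; split_ifs <;> positivity
  have hC : ∀ a b, (J - E) a b ≠ 0 := by
    intro a b; simp [J, E, single_apply]; split_ifs
    · exact sub_ne_zero.2 (by exact_mod_cast (Fintype.one_lt_card (α := n)).ne)
    · norm_num
  refine ⟨fromBlocks (J + E) (J - E) (J - E) (J + E),
    (hJ.add hE).fromBlocks (hJ.sub hE) (hJ.add hE), ?_,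
    (of fun _ _ => 2 : Matrix n n R).charpoly, ?_⟩
  · rintro (a | a) (b | b)
    exacts [hB a b, hC a b, hC a b, hB a b]
  · rw [charpoly_fromBlocks_self_swap, hsum, hdiff, ← charpoly_of_const_eq_charpoly_single, sq]

end Matrix

theorem stmt_16 (m : ℕ) (hm : 2 ≤ m) :
    ∃ A : Matrix (Fin (2 * m)) (Fin (2 * m)) ℝ, A.IsSymm ∧
      (∀ i j : Fin (2 * m), i ≠ j → A i j ≠ 0) ∧
      ∃ g : Polynomial ℝ, A.charpoly = g ^ 2 := by
  have : Nontrivial (Fin m) := Fin.nontrivial_iff_two_le.2 hm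
  obtain ⟨A, hA, hA_ne, g, hg⟩ := exists_isSymm_forall_ne_zero_charpoly_eq_sq (Fin m) ℝ
  let e : Fin m ⊕ Fin m ≃ Fin (2 * m) := finSumFinEquiv.trans (finCongr (two_mul m).symm)
  exact ⟨reindex e e A, hA.submatrix _, fun i j _ => hA_ne _ _, g, by rw [charpoly_reindex, hg]⟩
end

section
/- For every graph G on n-1 vertices, the join G ∨ K_{n+1} (add n+1 mutually adjacent new vertices, each adjacent to all vertices of G) allows the characteristic polynomial a square: there exists a matrix in S(G ∨ K_{n+1}) whose characteristic polynomial is the square of a real polynomial. -/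
/-!
Let `C` be a symmetric matrix with the pattern of the cone `G ∨ K₁`. The characteristic polynomial
of `C ⊕ C` is the square of that of `C`. Index `C ⊕ C` by `V ⊕ W`, where `V` is the vertex set of the
first copy of `G` and `W` consists of the second copy of `V` and both apexes (so `|W| = |V| + 2`),
and conjugate by `1 ⊕ Q`, with `Q = 1 - (2 / |W|) J` the reflection orthogonal to the all-ones
vector. This keeps the matrix symmetric, keeps its characteristic polynomial and does not change
the `V`-`V` block. Off the `V`-`V` block every entry is now nonzero: for
`C = [[1 + L(G), -1], [-1, 0]]` the rows of the `W`-`W` block sum to `0`, except the row of the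
second apex. So `Q` shifts each entry by an explicit multiple of `2 / (|V| + 2)`, and the shifted
entries are nonzero because `2 |V|² ≠ (|V| + 2)²`.
-/

open Polynomial Matrix

theorem add_ne_zero_of_eq_zero_or_eq_neg_one {R : Type*} [Ring R] {t s : R}
    (ht : t = 0 ∨ t = -1) (hs₀ : s ≠ 0) (hs₁ : s ≠ 1) : t + s ≠ 0 := by
  rcases ht with rfl | rfl
  · rwa [zero_add]
  · exact fun h => hs₁ (neg_add_eq_zero.1 h).symm

theorem Nat.two_mul_sq_ne_add_two_sq (m : ℕ) : 2 * m ^ 2 ≠ (m + 2) ^ 2 := by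
  intro h
  have : m < 5 := by nlinarith
  interval_cases m <;> omega

namespace Matrix

theorem charpoly_mul_mul_of_mul_self_eq_one_s17 {ι R : Type*} [Fintype ι] [DecidableEq ι]
    [CommRing R] {P N : Matrix ι ι R} (h : P * P = 1) : (P * N * P).charpoly = N.charpoly := by
  rw [charpoly_mul_comm, ← Matrix.mul_assoc, h, Matrix.one_mul]

theorem fromBlocks_one_mul_mul_fromBlocks_one {l m α : Type*} [Fintype l] [Fintype m]
    [DecidableEq l] [Semiring α] (N : Matrix (l ⊕ m) (l ⊕ m) α) (Q : Matrix m m α) :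
    fromBlocks 1 0 0 Q * N * fromBlocks 1 0 0 Q =
      fromBlocks N.toBlocks₁₁ (N.toBlocks₁₂ * Q) (Q * N.toBlocks₂₁) (Q * N.toBlocks₂₂ * Q) := by
  conv_lhs => rw [← fromBlocks_toBlocks N]
  simp [fromBlocks_multiply, Matrix.mul_assoc]

section onesReflection

variable (ι K : Type*) [Fintype ι] [DecidableEq ι] [Field K]

def onesReflection : Matrix ι ι K :=
  1 - (2 / Fintype.card ι : K) • of fun _ _ => 1

variable {ι K}

theorem onesReflection_isSymm : (onesReflection ι K).IsSymm := by
  rw [onesReflection, IsSymm, transpose_sub, transpose_one, transpose_smul]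
  rfl

theorem mul_onesReflection_apply {κ : Type*} (B : Matrix κ ι K) (i : κ) (w : ι) :
    (B * onesReflection ι K) i w = B i w - 2 / Fintype.card ι * (B *ᵥ 1) i := by
  rw [onesReflection, Matrix.mul_sub, Matrix.mul_one, Matrix.mul_smul, sub_apply, smul_apply,
    mul_apply]
  simp [mulVec, dotProduct]

theorem onesReflection_mul_apply {κ : Type*} (B : Matrix ι κ K) (w : ι) (i : κ) :
    (onesReflection ι K * B) w i = B w i - 2 / Fintype.card ι * (1 ᵥ* B) i := by
  rw [onesReflection, Matrix.sub_mul, Matrix.one_mul, Matrix.smul_mul, sub_apply, smul_apply,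
    mul_apply]
  simp [vecMul, dotProduct]

theorem onesReflection_mul_self : onesReflection ι K * onesReflection ι K = 1 := by
  have hc : (2 / Fintype.card ι : K) * (2 / Fintype.card ι) * Fintype.card ι =
      2 * (2 / Fintype.card ι) := by
    by_cases hι : (Fintype.card ι : K) = 0
    · simp [hι]
    · field_simp
  ext x y
  rw [mul_onesReflection_apply]
  simp only [onesReflection, mulVec, dotProduct, sub_apply, smul_apply, of_apply, smul_eq_mul,
    mul_one, Pi.one_apply, Finset.sum_sub_distrib, one_apply, Finset.sum_ite_eq,
    Finset.mem_univ, if_true, Finset.sum_const, Finset.card_univ, nsmul_eq_mul]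
  linear_combination hc

theorem IsSymm.onesReflection_mul_mul_onesReflection_apply {P : Matrix ι ι K} (hP : P.IsSymm)
    (x y : ι) :
    (onesReflection ι K * P * onesReflection ι K) x y =
      P x y - 2 / Fintype.card ι * ((P *ᵥ 1) x + (P *ᵥ 1) y) +
        (2 / Fintype.card ι) ^ 2 * (1 ⬝ᵥ P *ᵥ 1) := by
  have hrow : ((onesReflection ι K * P) *ᵥ 1) x =
      (P *ᵥ 1) x - 2 / Fintype.card ι * (1 ⬝ᵥ P *ᵥ 1) := by
    simp only [mulVec, dotProduct, Pi.one_apply, mul_one, onesReflection_mul_apply,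
      Finset.sum_sub_distrib, ← Finset.mul_sum, vecMul, one_mul]
    rw [Finset.sum_comm]
  rw [mul_onesReflection_apply, onesReflection_mul_apply, hrow, ← mulVec_transpose, hP.eq]
  ring

end onesReflection

/-- The zero pattern of `S(G ∨ K_W)`, symmetry aside. -/
def HasJoinCompletePattern {V W R : Type*} [Zero R] (G : SimpleGraph V)
    (M : Matrix (V ⊕ W) (V ⊕ W) R) : Prop :=
  (∀ i j : V, i ≠ j → (M (.inl i) (.inl j) ≠ 0 ↔ G.Adj i j)) ∧
    (∀ (i : V) (w : W), M (.inl i) (.inr w) ≠ 0) ∧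
    ∀ w w' : W, w ≠ w' → M (.inr w) (.inr w') ≠ 0

theorem HasJoinCompletePattern.submatrix_sumMap {V W W' R : Type*} [Zero R]
    {G : SimpleGraph V} {M : Matrix (V ⊕ W) (V ⊕ W) R} (hM : M.HasJoinCompletePattern G)
    (e : W' ≃ W) : (M.submatrix (Sum.map id e) (Sum.map id e)).HasJoinCompletePattern G := by
  obtain ⟨hVV, hVW, hWW⟩ := hM
  exact ⟨hVV, fun i w => hVW i (e w), fun w w' h => hWW _ _ (e.injective.ne h)⟩

end Matrix

noncomputable section

namespace SimpleGraph

variable {V : Type*} [Fintype V] [DecidableEq V] (G : SimpleGraph V) [DecidableRel G.Adj]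

theorem lapMatrix_apply_of_ne {R : Type*} [AddGroupWithOne R] {i j : V} (h : i ≠ j) :
    G.lapMatrix R i j = -G.adjMatrix R i j := by
  simp [lapMatrix, degMatrix, h]

theorem sum_lapMatrix_apply {R : Type*} [NonAssocRing R] (i : V) : ∑ j, G.lapMatrix R i j = 0 := by
  simpa [mulVec, dotProduct] using congr_fun (G.lapMatrix_mulVec_const_eq_zero (R := R)) i

/-- The diagonal `1 + L(G)` makes every row through `V` sum to `0`. -/
def coneMatrix : Matrix (V ⊕ Unit) (V ⊕ Unit) ℝ :=
  fromBlocks (1 + G.lapMatrix ℝ) (of fun _ _ => -1) (of fun _ _ => -1) 0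

theorem coneMatrix_isSymm : G.coneMatrix.IsSymm :=
  isSymm_one.add (G.isSymm_lapMatrix ℝ) |>.fromBlocks rfl isSymm_zero

theorem coneMatrix_apply_of_ne {p q : V ⊕ Unit} (h : p ≠ q) :
    G.coneMatrix p q = 0 ∨ G.coneMatrix p q = -1 := by
  rcases p with i | ⟨⟩ <;> rcases q with j | ⟨⟩
  · have hij : i ≠ j := fun hij => h (congrArg _ hij)
    simp only [coneMatrix, fromBlocks_apply₁₁, Matrix.add_apply, one_apply_ne hij, zero_add,
      G.lapMatrix_apply_of_ne hij, adjMatrix_apply]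
    split_ifs <;> simp
  all_goals simp_all [coneMatrix]

/-- The apex of the first cone goes to `inr (inr (inl ()))`, that of the second to
`inr (inr (inr ()))`. -/
def twoConeEquiv (V : Type*) : (V ⊕ Unit) ⊕ (V ⊕ Unit) ≃ V ⊕ (V ⊕ (Unit ⊕ Unit)) :=
  (Equiv.sumSumSumComm V Unit V Unit).trans (Equiv.sumAssoc V V (Unit ⊕ Unit))

def twoConeMatrix : Matrix (V ⊕ (V ⊕ (Unit ⊕ Unit))) (V ⊕ (V ⊕ (Unit ⊕ Unit))) ℝ :=
  reindex (twoConeEquiv V) (twoConeEquiv V) (fromBlocks G.coneMatrix 0 0 G.coneMatrix)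

theorem twoConeMatrix_isSymm : G.twoConeMatrix.IsSymm :=
  (G.coneMatrix_isSymm.fromBlocks transpose_zero G.coneMatrix_isSymm).submatrix _

theorem charpoly_twoConeMatrix : G.twoConeMatrix.charpoly = G.coneMatrix.charpoly ^ 2 := by
  rw [twoConeMatrix, charpoly_reindex, charpoly_fromBlocks_zero₂₁, sq]

theorem toBlocks₂₂_twoConeMatrix_isSymm : G.twoConeMatrix.toBlocks₂₂.IsSymm :=
  IsSymm.ext fun x y => G.twoConeMatrix_isSymm.apply (.inr x) (.inr y)

theorem twoConeMatrix_apply_of_ne {p q : V ⊕ (V ⊕ (Unit ⊕ Unit))} (h : p ≠ q) :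
    G.twoConeMatrix p q = 0 ∨ G.twoConeMatrix p q = -1 := by
  rw [twoConeMatrix, reindex_apply, submatrix_apply]
  have h' := (twoConeEquiv V).symm.injective.ne h
  generalize (twoConeEquiv V).symm p = p', (twoConeEquiv V).symm q = q' at h' ⊢
  rcases p' with p' | p' <;> rcases q' with q' | q'
  · exact G.coneMatrix_apply_of_ne (fun h => h' (congrArg _ h))
  · exact .inl rfl
  · exact .inl rfl
  · exact G.coneMatrix_apply_of_ne (fun h => h' (congrArg _ h))

theorem twoConeMatrix_inl_inl (i j : V) :
    G.twoConeMatrix (.inl i) (.inl j) = (1 + G.lapMatrix ℝ) i j := by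
  simp [twoConeMatrix, twoConeEquiv, coneMatrix]

theorem toBlocks₁₂_twoConeMatrix_mulVec_one : G.twoConeMatrix.toBlocks₁₂ *ᵥ 1 = -1 := by
  ext i
  simp [twoConeMatrix, twoConeEquiv, coneMatrix, toBlocks₁₂, mulVec, dotProduct,
    Fintype.sum_sum_type]

theorem toBlocks₂₂_twoConeMatrix_mulVec_one :
    G.twoConeMatrix.toBlocks₂₂ *ᵥ 1 =
      fun x => if x = .inr (.inr ()) then -(Fintype.card V : ℝ) else 0 := by
  ext x
  rcases x with v | (⟨⟩ | ⟨⟩) <;>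
    simp [twoConeMatrix, twoConeEquiv, coneMatrix, toBlocks₂₂, mulVec, dotProduct,
      Fintype.sum_sum_type, Finset.sum_add_distrib, one_apply, sum_lapMatrix_apply]

def joinMatrix : Matrix (V ⊕ (V ⊕ (Unit ⊕ Unit))) (V ⊕ (V ⊕ (Unit ⊕ Unit))) ℝ :=
  fromBlocks 1 0 0 (onesReflection _ ℝ) * G.twoConeMatrix * fromBlocks 1 0 0 (onesReflection _ ℝ)

theorem joinMatrix_isSymm : G.joinMatrix.IsSymm := by
  have hR : (fromBlocks 1 0 0 (onesReflection _ ℝ) :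
      Matrix (V ⊕ (V ⊕ (Unit ⊕ Unit))) (V ⊕ (V ⊕ (Unit ⊕ Unit))) ℝ).IsSymm :=
    isSymm_one.fromBlocks transpose_zero onesReflection_isSymm
  rw [IsSymm, joinMatrix, transpose_mul, transpose_mul, hR.eq, G.twoConeMatrix_isSymm.eq,
    Matrix.mul_assoc]

theorem charpoly_joinMatrix : G.joinMatrix.charpoly = G.coneMatrix.charpoly ^ 2 := by
  rw [joinMatrix, charpoly_mul_mul_of_mul_self_eq_one_s17, charpoly_twoConeMatrix]
  simp [fromBlocks_multiply, onesReflection_mul_self]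

theorem joinMatrix_inl_inl (i j : V) :
    G.joinMatrix (.inl i) (.inl j) = (1 + G.lapMatrix ℝ) i j := by
  rw [joinMatrix, fromBlocks_one_mul_mul_fromBlocks_one, fromBlocks_apply₁₁, toBlocks₁₁,
    of_apply, twoConeMatrix_inl_inl]

theorem joinMatrix_inl_inr (i : V) (w : V ⊕ (Unit ⊕ Unit)) :
    G.joinMatrix (.inl i) (.inr w) =
      G.twoConeMatrix (.inl i) (.inr w) + 2 / (Fintype.card V + 2) := by
  rw [joinMatrix, fromBlocks_one_mul_mul_fromBlocks_one, fromBlocks_apply₁₂,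
    mul_onesReflection_apply, toBlocks₁₂_twoConeMatrix_mulVec_one]
  simp [toBlocks₁₂]

theorem joinMatrix_inr_inr_of_ne {x y : V ⊕ (Unit ⊕ Unit)} (h : x ≠ y) :
    G.joinMatrix (.inr x) (.inr y) = G.twoConeMatrix (.inr x) (.inr y) +
      (if x = .inr (.inr ()) ∨ y = .inr (.inr ()) then
        2 / (Fintype.card V + 2) * Fintype.card V * (1 - 2 / (Fintype.card V + 2))
      else -((2 / (Fintype.card V + 2)) ^ 2 * Fintype.card V) : ℝ) := by
  rw [joinMatrix, fromBlocks_one_mul_mul_fromBlocks_one, fromBlocks_apply₂₂,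
    G.toBlocks₂₂_twoConeMatrix_isSymm.onesReflection_mul_mul_onesReflection_apply,
    toBlocks₂₂_twoConeMatrix_mulVec_one]
  simp only [toBlocks₂₂, of_apply, dotProduct, Pi.one_apply, one_mul, Finset.sum_ite_eq',
    Finset.mem_univ, if_true, Fintype.card_sum, Fintype.card_unit, Nat.cast_add]
  by_cases hx : x = .inr (.inr ()) <;> by_cases hy : y = .inr (.inr ())
  · exact absurd (hx.trans hy.symm) h
  all_goals simp only [hx, hy, if_true, if_false, or_false, false_or, or_self]; ring

theorem joinMatrix_hasJoinCompletePattern [Nonempty V] :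
    G.joinMatrix.HasJoinCompletePattern G := by
  set m : ℝ := Nat.cast (Fintype.card V) with hm_def
  set c : ℝ := 2 / (m + 2) with hc_def
  have hm : 1 ≤ m := by rw [hm_def]; exact_mod_cast Fintype.card_pos
  have hc₀ : 0 < c := by positivity
  have hc₁ : c < 1 := by rw [hc_def, div_lt_one (by positivity)]; linarith
  have hcm₀ : 0 < c * m * (1 - c) := mul_pos (mul_pos hc₀ (by linarith)) (by linarith)
  have hcm₁ : c * m * (1 - c) ≠ 1 := by
    rw [hc_def]
    field_simp
    rw [Ne, div_eq_one_iff_eq (by positivity)]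
    intro h
    have h' : (2 : ℝ) * Fintype.card V ^ 2 = (Fintype.card V + 2) ^ 2 := by
      rw [← hm_def]; linear_combination h
    exact Nat.two_mul_sq_ne_add_two_sq _ (by exact_mod_cast h')
  have hc2m : 0 < c ^ 2 * m := by positivity
  refine ⟨fun i j hij => ?_, fun i w => ?_, fun x y hxy => ?_⟩
  · rw [joinMatrix_inl_inl, Matrix.add_apply, one_apply_ne hij, zero_add, lapMatrix_apply_of_ne _ hij,
      neg_ne_zero, adjMatrix_apply]
    simp
  · rw [joinMatrix_inl_inr]
    exact add_ne_zero_of_eq_zero_or_eq_neg_one (G.twoConeMatrix_apply_of_ne Sum.inl_ne_inr)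
      hc₀.ne' hc₁.ne
  · rw [joinMatrix_inr_inr_of_ne _ hxy, ← hm_def, ← hc_def]
    refine add_ne_zero_of_eq_zero_or_eq_neg_one
      (G.twoConeMatrix_apply_of_ne (Sum.inr_injective.ne hxy)) ?_ ?_ <;> split_ifs
    · exact hcm₀.ne'
    · exact neg_ne_zero.2 hc2m.ne'
    · exact hcm₁
    · linarith

end SimpleGraph

theorem SimpleGraph.exists_isSymm_hasJoinCompletePattern_charpoly_eq_sq {V W : Type*}
    [Fintype V] [DecidableEq V] [Nonempty V] [Fintype W] [DecidableEq W] (G : SimpleGraph V)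
    (hW : Fintype.card W = Fintype.card V + 2) :
    ∃ M : Matrix (V ⊕ W) (V ⊕ W) ℝ, M.IsSymm ∧ M.HasJoinCompletePattern G ∧
      ∃ g : ℝ[X], M.charpoly = g ^ 2 := by
  classical
  let e : V ⊕ W ≃ V ⊕ (V ⊕ (Unit ⊕ Unit)) :=
    Equiv.sumCongr (Equiv.refl V) (Fintype.equivOfCardEq (by simp [hW]))
  refine ⟨G.joinMatrix.submatrix e e, G.joinMatrix_isSymm.submatrix e,
    G.joinMatrix_hasJoinCompletePattern.submatrix_sumMap _, G.coneMatrix.charpoly, ?_⟩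
  rw [← charpoly_joinMatrix, ← charpoly_reindex e.symm, reindex_apply, Equiv.symm_symm]

end

theorem stmt_17 (n : ℕ) (hn : 2 ≤ n) (G : SimpleGraph (Fin (n - 1))) :
    ∃ M : Matrix (Fin (n - 1) ⊕ Fin (n + 1)) (Fin (n - 1) ⊕ Fin (n + 1)) ℝ, M.IsSymm ∧
      (∀ i j : Fin (n - 1), i ≠ j → (M (Sum.inl i) (Sum.inl j) ≠ 0 ↔ G.Adj i j)) ∧
      (∀ (i : Fin (n - 1)) (j : Fin (n + 1)), M (Sum.inl i) (Sum.inr j) ≠ 0) ∧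
      (∀ i j : Fin (n + 1), i ≠ j → M (Sum.inr i) (Sum.inr j) ≠ 0) ∧
      ∃ g : Polynomial ℝ, M.charpoly = g ^ 2 := by
  have : Nonempty (Fin (n - 1)) := ⟨⟨0, by omega⟩⟩
  obtain ⟨M, hM, ⟨hVV, hVW, hWW⟩, hsq⟩ :=
    G.exists_isSymm_hasJoinCompletePattern_charpoly_eq_sq (W := Fin (n + 1)) (by simp; omega)
  exact ⟨M, hM, hVV, hVW, hWW, hsq⟩
end
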